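/- arXiv:math/0611386 — 4 statements merged into one kernel-verified Lean document; each statement's English description precedes it below -/
import Mathlib

section
/- Let N = N(Q_n, m) be a quasi Q_n-filiform Lie algebra and let U be the subspace of N spanned by {e_{10}, e_{11}, e_{20}, e_{21}, ..., e_{m0}, e_{m1}}. Then N is quasi-cyclic: N = U ⊕ c^1U ⊕ c^2U ⊕ ... ⊕ c^{n-1}U as a direct sum of vector subspaces, where c^0U = U and c^iU is the span of all brackets [u, v] with u ∈ U, v ∈ c^{i-1}U. -/
open Finset

/-- A quasi `Qₙ`-filiform Lie algebra `N = N(Qₙ, m, r)`: a finite-dimensional complex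
nilpotent Lie algebra which is the sum of `m` pairwise commuting subalgebras, each
isomorphic to the filiform Lie algebra `Qₙ` with basis `e i 0, …, e i n` satisfying the
`Qₙ` bracket relations, and such that
`{e 1 0, …, e 1 (n-1), …, e m 0, …, e m (n-1), e 1 n, …, e r n}` is a basis of `N`,
where `r = dim c^{n-1} N`. -/
structure QuasiQnFiliform (n m r : ℕ) (N : Type*) [LieRing N] [LieAlgebra ℂ N] : Type _ where
  /-- the distinguished vectors `e_{ij}`, for `1 ≤ i ≤ m`, `0 ≤ j ≤ n` -/
  e : ℕ → ℕ → N
  /-- `N` is nilpotent -/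
  nilpotent : LieRing.IsNilpotent N
  /-- `N` is finite-dimensional -/
  findim : FiniteDimensional ℂ N
  /-- `[e_{i0}, e_{ij}] = e_{i,j+1}` for `1 ≤ j ≤ n - 2` -/
  bracket_e0 : ∀ i j, 1 ≤ i → i ≤ m → 1 ≤ j → j ≤ n - 2 → ⁅e i 0, e i j⁆ = e i (j + 1)
  /-- `[e_{i0}, e_{i,n-1}] = 0` -/
  bracket_e0_top : ∀ i, 1 ≤ i → i ≤ m → ⁅e i 0, e i (n - 1)⁆ = 0
  /-- `[e_{i0}, e_{in}] = 0` -/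
  bracket_e0_n : ∀ i, 1 ≤ i → i ≤ m → ⁅e i 0, e i n⁆ = 0
  /-- `[e_{ij}, e_{i,n-j}] = (-1)^j e_{in}` for `1 ≤ j ≤ n - 1` -/
  bracket_pair : ∀ i j, 1 ≤ i → i ≤ m → 1 ≤ j → j ≤ n - 1 →
    ⁅e i j, e i (n - j)⁆ = ((-1 : ℂ)) ^ j • e i n
  /-- all remaining brackets inside a component vanish -/
  bracket_zero : ∀ i j k, 1 ≤ i → i ≤ m → 1 ≤ j → j ≤ n → 1 ≤ k → k ≤ n → j + k ≠ n →
    ⁅e i j, e i k⁆ = 0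
  /-- distinct components commute: `[N_i, N_{i'}] = 0` -/
  bracket_comm : ∀ i i' j j', 1 ≤ i → i ≤ m → 1 ≤ i' → i' ≤ m → i ≠ i' → j ≤ n → j' ≤ n →
    ⁅e i j, e i' j'⁆ = 0
  /-- `{e_{i0}, …, e_{in}}` is linearly independent (each `Nᵢ ≅ Qₙ` has it as a basis) -/
  indep_comp : ∀ i, 1 ≤ i → i ≤ m → LinearIndependent ℂ (fun j : Fin (n + 1) => e i (j : ℕ))
  /-- the distinguished family is linearly independent … -/
  basis_indep : LinearIndependent ℂ
    (Sum.elim (fun p : Fin m × Fin n => e ((p.1 : ℕ) + 1) (p.2 : ℕ))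
      (fun t : Fin r => e ((t : ℕ) + 1) n))
  /-- … and spans `N`, i.e. it is a basis of `N` (in particular `N = N₁ + ⋯ + N_m`) -/
  basis_span : Submodule.span ℂ (Set.range
    (Sum.elim (fun p : Fin m × Fin n => e ((p.1 : ℕ) + 1) (p.2 : ℕ))
      (fun t : Fin r => e ((t : ℕ) + 1) n))) = ⊤
  /-- `r = dim c^{n-1} N` -/
  rank_lcs : Module.finrank ℂ (LieModule.lowerCentralSeries ℂ N N (n - 1)) = r

/-- The span of brackets `[u, v]` with `u ∈ U`, `v ∈ V`. -/
def bracketSpan {N : Type*} [LieRing N] [LieAlgebra ℂ N] (U V : Submodule ℂ N) :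
    Submodule ℂ N :=
  Submodule.span ℂ {x | ∃ u ∈ U, ∃ v ∈ V, x = ⁅u, v⁆}

/-- `cPow U i = cⁱU`, defined by `c⁰U = U` and `cⁱU = span [U, c^{i-1}U]`. -/
def cPow {N : Type*} [LieRing N] [LieAlgebra ℂ N] (U : Submodule ℂ N) : ℕ → Submodule ℂ N
  | 0 => U
  | (i + 1) => bracketSpan U (cPow U i)

/-!
Bracketing with `U = span {e_{i0}, e_{i1}}` raises the second index by one: `cᵏU` is spanned by
the `e_{i,k+1}` for `1 ≤ k ≤ n - 2`, and `c^{n-1}U` by the `e_{in}`. The latter lie in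
`c^{n-1}N`, which has dimension `r` and contains the `r` independent vectors `e_{in}`, `i ≤ r`.
Hence every `cᵏU` is spanned by one block of the given basis of `N`, and the blocks partition it.
-/

open Submodule

section Generic

variable {ι κ R M : Type*} [Ring R] [AddCommGroup M] [Module R M] {b : ι → M}

theorem iSup_eq_top_of_forall_mem {V : κ → Submodule R M} (f : ι → κ)
    (hb : span R (Set.range b) = ⊤) (h : ∀ x, b x ∈ V (f x)) : ⨆ k, V k = ⊤ := by
  rw [eq_top_iff, ← hb, span_le]
  rintro _ ⟨x, rfl⟩
  exact le_iSup V (f x) (h x)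

theorem LinearIndependent.iSupIndep_span_image_fiber (hb : LinearIndependent R b) (f : ι → κ) :
    iSupIndep fun k => span R (b '' (f ⁻¹' {k})) := by
  refine iSupIndep_def.2 fun k => (hb.disjoint_span_image disjoint_compl_right).mono_right ?_
  exact iSup₂_le fun j hj => span_mono (Set.image_mono fun x hx hxk => hj (hx.symm.trans hxk))

end Generic

section BracketSpan

variable {N : Type*} [LieRing N] [LieAlgebra ℂ N]

theorem lie_mem_span_lie_of_mem_span {s t : Set N} {u v : N} (hu : u ∈ span ℂ s)
    (hv : v ∈ span ℂ t) : ⁅u, v⁆ ∈ span ℂ {x | ∃ a ∈ s, ∃ b ∈ t, x = ⁅a, b⁆} := by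
  induction hu using span_induction with
  | mem a ha =>
    induction hv using span_induction with
    | mem b hb => exact subset_span ⟨a, ha, b, hb, rfl⟩
    | zero => simp
    | add x y _ _ hx hy => rw [lie_add]; exact add_mem hx hy
    | smul c x _ hx => rw [lie_smul]; exact smul_mem _ _ hx
  | zero => simp
  | add x y _ _ hx hy => rw [add_lie]; exact add_mem hx hy
  | smul c x _ hx => rw [smul_lie]; exact smul_mem _ _ hx

theorem bracketSpan_span_span (s t : Set N) :
    bracketSpan (span ℂ s) (span ℂ t) = span ℂ {x | ∃ a ∈ s, ∃ b ∈ t, x = ⁅a, b⁆} := by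
  refine le_antisymm (span_le.2 ?_) (span_mono ?_)
  · rintro _ ⟨u, hu, v, hv, rfl⟩
    exact lie_mem_span_lie_of_mem_span hu hv
  · rintro _ ⟨a, ha, b, hb, rfl⟩
    exact ⟨a, subset_span ha, b, subset_span hb, rfl⟩

theorem bracketSpan_mono_right (U : Submodule ℂ N) {V V' : Submodule ℂ N} (h : V ≤ V') :
    bracketSpan U V ≤ bracketSpan U V' :=
  span_mono fun _ ⟨u, hu, v, hv, hx⟩ => ⟨u, hu, v, h hv, hx⟩

theorem cPow_le_lowerCentralSeries (U : Submodule ℂ N) :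
    ∀ k, cPow U k ≤ (LieModule.lowerCentralSeries ℂ N N k).toSubmodule
  | 0 => by simp [cPow]
  | k + 1 => span_le.2 fun _ ⟨u, _, v, hv, hx⟩ => by
    rw [hx, LieModule.lowerCentralSeries_succ]
    exact LieSubmodule.lie_mem_lie (LieSubmodule.mem_top u) (cPow_le_lowerCentralSeries U k hv)

end BracketSpan

namespace QuasiQnFiliform

variable {n m r : ℕ} {N : Type*} [LieRing N] [LieAlgebra ℂ N] (Q : QuasiQnFiliform n m r N)

def generators : Set N := {v | ∃ i, 1 ≤ i ∧ i ≤ m ∧ (v = Q.e i 0 ∨ v = Q.e i 1)}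

def layer (j : ℕ) : Set N := {v | ∃ i, 1 ≤ i ∧ i ≤ m ∧ v = Q.e i j}

variable {Q}

theorem lie_mem_span_layer_succ {x y : N} {j : ℕ} (hx : x ∈ Q.generators) (hy : y ∈ Q.layer j)
    (hj : 1 ≤ j) (hjn : j ≤ n - 1) : ⁅x, y⁆ ∈ span ℂ (Q.layer (j + 1)) := by
  obtain ⟨i, hi, him, rfl | rfl⟩ := hx <;> obtain ⟨i', hi', hi'm, rfl⟩ := hy <;>
    obtain rfl | hii' := eq_or_ne i i'
  · rcases lt_or_eq_of_le hjn with hjn | rfl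
    · rw [Q.bracket_e0 i j hi him hj (by omega)]
      exact subset_span ⟨i, hi, him, rfl⟩
    · rw [Q.bracket_e0_top i hi him]
      exact zero_mem _
  · rw [Q.bracket_comm i i' 0 j hi him hi' hi'm hii' (by omega) (by omega)]
    exact zero_mem _
  · rcases lt_or_eq_of_le hjn with hjn | rfl
    · rw [Q.bracket_zero i 1 j hi him le_rfl (by omega) hj (by omega) (by omega)]
      exact zero_mem _
    · rw [Q.bracket_pair i 1 hi him le_rfl (by omega), Nat.sub_add_cancel (by omega)]
      exact smul_mem _ _ (subset_span ⟨i, hi, him, rfl⟩)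
  · rw [Q.bracket_comm i i' 1 j hi him hi' hi'm hii' (by omega) (by omega)]
    exact zero_mem _

theorem lie_mem_span_layer_two {x y : N} (hn : 3 ≤ n) (hx : x ∈ Q.generators)
    (hy : y ∈ Q.layer 0) : ⁅x, y⁆ ∈ span ℂ (Q.layer 2) := by
  obtain ⟨i, hi, him, rfl | rfl⟩ := hx <;> obtain ⟨i', hi', hi'm, rfl⟩ := hy <;>
    obtain rfl | hii' := eq_or_ne i i'
  · rw [lie_self]
    exact zero_mem _
  · rw [Q.bracket_comm i i' 0 0 hi him hi' hi'm hii' (by omega) (by omega)]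
    exact zero_mem _
  · rw [← lie_skew, Q.bracket_e0 i 1 hi him le_rfl (by omega)]
    exact neg_mem (subset_span ⟨i, hi, him, rfl⟩)
  · rw [Q.bracket_comm i i' 1 0 hi him hi' hi'm hii' (by omega) (by omega)]
    exact zero_mem _

theorem layer_succ_subset_span_lie {j : ℕ} (hj : 1 ≤ j) (hjn : j ≤ n - 1) :
    Q.layer (j + 1) ⊆ span ℂ {z | ∃ x ∈ Q.generators, ∃ y ∈ Q.layer j, z = ⁅x, y⁆} := by
  rintro _ ⟨i, hi, him, rfl⟩
  rcases lt_or_eq_of_le hjn with hjn | rfl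
  · rw [← Q.bracket_e0 i j hi him hj (by omega)]
    exact subset_span ⟨_, ⟨i, hi, him, Or.inl rfl⟩, _, ⟨i, hi, him, rfl⟩, rfl⟩
  · have hpair := Q.bracket_pair i 1 hi him le_rfl (by omega)
    rw [Nat.sub_add_cancel (by omega), show Q.e i n = (-1 : ℂ) • ⁅Q.e i 1, Q.e i (n - 1)⁆ by
      simp [hpair]]
    exact smul_mem _ _ (subset_span ⟨_, ⟨i, hi, him, Or.inr rfl⟩, _, ⟨i, hi, him, rfl⟩, rfl⟩)

theorem bracketSpan_span_layer {j : ℕ} (hj : 1 ≤ j) (hjn : j ≤ n - 1) :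
    bracketSpan (span ℂ Q.generators) (span ℂ (Q.layer j)) = span ℂ (Q.layer (j + 1)) := by
  rw [bracketSpan_span_span]
  refine le_antisymm (span_le.2 ?_) (span_le.2 (layer_succ_subset_span_lie hj hjn))
  rintro _ ⟨x, hx, y, hy, rfl⟩
  exact lie_mem_span_layer_succ hx hy hj hjn

theorem bracketSpan_span_generators (hn : 3 ≤ n) :
    bracketSpan (span ℂ Q.generators) (span ℂ Q.generators) = span ℂ (Q.layer 2) := by
  refine le_antisymm ?_ ?_
  · rw [bracketSpan_span_span, span_le]
    rintro _ ⟨x, hx, y, ⟨i, hi, him, rfl | rfl⟩, rfl⟩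
    · exact lie_mem_span_layer_two hn hx ⟨i, hi, him, rfl⟩
    · exact lie_mem_span_layer_succ hx ⟨i, hi, him, rfl⟩ le_rfl (by omega)
  · rw [← bracketSpan_span_layer le_rfl (by omega)]
    exact bracketSpan_mono_right _ (span_mono fun _ ⟨i, hi, him, hv⟩ => ⟨i, hi, him, Or.inr hv⟩)

theorem cPow_span_generators (hn : 3 ≤ n) :
    ∀ k, 1 ≤ k → k ≤ n - 1 → cPow (span ℂ Q.generators) k = span ℂ (Q.layer (k + 1))
  | 1, _, _ => bracketSpan_span_generators hn
  | k + 2, _, hk => by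
    rw [cPow, cPow_span_generators hn (k + 1) (by omega) (by omega)]
    exact bracketSpan_span_layer (by omega) hk

theorem span_layer_top (hn : 3 ≤ n) (hrm : r ≤ m) :
    span ℂ (Q.layer n) = span ℂ (Set.range fun t : Fin r => Q.e (t + 1) n) := by
  have := Q.findim
  have hind : LinearIndependent ℂ fun t : Fin r => Q.e (t + 1) n :=
    Q.basis_indep.comp Sum.inr Sum.inr_injective
  have hle : span ℂ (Set.range fun t : Fin r => Q.e (t + 1) n) ≤ span ℂ (Q.layer n) :=
    span_mono fun _ ⟨t, ht⟩ => ⟨t + 1, by omega, by omega, ht.symm⟩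
  have hlcs : span ℂ (Q.layer n) ≤ (LieModule.lowerCentralSeries ℂ N N (n - 1)).toSubmodule := by
    have htop := cPow_span_generators (Q := Q) hn (n - 1) (by omega) le_rfl
    rw [Nat.sub_add_cancel (by omega)] at htop
    exact htop ▸ cPow_le_lowerCentralSeries _ _
  -- The `r` independent vectors `e_{tn}`, `1 ≤ t ≤ r`, fill the `r`-dimensional `c^{n-1} N`.
  have heq := eq_of_le_of_finrank_le (hle.trans hlcs)
    (by rw [finrank_span_eq_card hind, Fintype.card_fin]; exact Q.rank_lcs.le)
  exact le_antisymm (heq ▸ hlcs) hle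

variable (Q) in
def basisFamily : (Fin m × Fin n) ⊕ Fin r → N :=
  Sum.elim (fun p => Q.e (p.1 + 1) p.2) (fun t => Q.e (t + 1) n)

/-- Truncated subtraction puts both `e_{i0}` and `e_{i1}` in degree `0`. -/
def basisDegree (hn : 0 < n) : (Fin m × Fin n) ⊕ Fin r → Fin n :=
  Sum.elim (fun p => ⟨p.2 - 1, by omega⟩) (fun _ => ⟨n - 1, by omega⟩)

theorem basisFamily_mem_cPow (hn : 3 ≤ n) (hrm : r ≤ m) (x : (Fin m × Fin n) ⊕ Fin r) :
    Q.basisFamily x ∈ cPow (span ℂ Q.generators) (basisDegree (by omega) x) := by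
  rcases x with ⟨i, j⟩ | t
  · have hdeg : (basisDegree (r := r) (by omega) (Sum.inl (i, j)) : ℕ) = j - 1 := rfl
    by_cases hj : (j : ℕ) ≤ 1
    · rw [hdeg, Nat.sub_eq_zero_of_le hj]
      refine subset_span ⟨i + 1, by omega, by omega, ?_⟩
      obtain hj | hj : (j : ℕ) = 0 ∨ (j : ℕ) = 1 := by omega
      exacts [Or.inl (by simp [basisFamily, hj]), Or.inr (by simp [basisFamily, hj])]
    · rw [hdeg, cPow_span_generators hn _ (by omega) (by omega), Nat.sub_add_cancel (by omega)]
      exact subset_span ⟨i + 1, by omega, by omega, rfl⟩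
  · have hdeg : (basisDegree (n := n) (m := m) (by omega) (Sum.inr t) : ℕ) = n - 1 := rfl
    rw [hdeg, cPow_span_generators hn _ (by omega) le_rfl, Nat.sub_add_cancel (by omega)]
    exact subset_span ⟨t + 1, by omega, by omega, rfl⟩

theorem e_mem_span_basisDegree_fiber (hn : 0 < n) {i j : ℕ} (hi : 1 ≤ i) (him : i ≤ m)
    (hjn : j < n) {k : Fin n} (hk : (k : ℕ) = j - 1) :
    Q.e i j ∈ span ℂ (Q.basisFamily '' (basisDegree (r := r) hn ⁻¹' {k})) :=
  subset_span ⟨Sum.inl (⟨i - 1, by omega⟩, ⟨j, hjn⟩), Fin.ext hk.symm,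
    by simp [basisFamily, Nat.sub_add_cancel hi]⟩

theorem cPow_le_span_basisDegree_fiber (hn : 3 ≤ n) (hrm : r ≤ m) (k : Fin n) :
    cPow (span ℂ Q.generators) k ≤
      span ℂ (Q.basisFamily '' (basisDegree (by omega) ⁻¹' {k})) := by
  obtain hk | hk | hk : (k : ℕ) = 0 ∨ (1 ≤ (k : ℕ) ∧ (k : ℕ) ≤ n - 2) ∨ (k : ℕ) = n - 1 := by
    omega
  · rw [hk, cPow, span_le]
    rintro _ ⟨i, hi, him, rfl | rfl⟩ <;>
      exact e_mem_span_basisDegree_fiber _ hi him (by omega) (by omega)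
  · rw [cPow_span_generators hn _ hk.1 (by omega), span_le]
    rintro _ ⟨i, hi, him, rfl⟩
    exact e_mem_span_basisDegree_fiber _ hi him (by omega) (by omega)
  · rw [cPow_span_generators hn _ (by omega) hk.le, hk, Nat.sub_add_cancel (by omega),
      span_layer_top hn hrm]
    exact span_mono fun _ ⟨t, ht⟩ => ⟨Sum.inr t, Fin.ext hk.symm, ht⟩

end QuasiQnFiliform

theorem quasiQnFiliform_quasiCyclic_general
    (n d m r : ℕ) (hn : n = 2 * d + 1) (hd : 2 ≤ d)
    (hrm : r ≤ m)
    (N : Type*) [LieRing N] [LieAlgebra ℂ N] (Q : QuasiQnFiliform n m r N)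
    (U : Submodule ℂ N)
    (hU : U = Submodule.span ℂ
      {v | ∃ i, 1 ≤ i ∧ i ≤ m ∧ (v = Q.e i 0 ∨ v = Q.e i 1)}) :
    (⨆ i : Fin n, cPow U (i : ℕ)) = ⊤ ∧ iSupIndep (fun i : Fin n => cPow U (i : ℕ)) := by
  have hn3 : 3 ≤ n := by omega
  change U = span ℂ Q.generators at hU
  subst hU
  exact ⟨iSup_eq_top_of_forall_mem _ Q.basis_span (Q.basisFamily_mem_cPow hn3 hrm),
    (Q.basis_indep.iSupIndep_span_image_fiber _).mono (Q.cPow_le_span_basisDegree_fiber hn3 hrm)⟩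

/-- **Lemma 1.3.** `N(Qₙ, m)` is quasi-cyclic: if `U` is the subspace spanned by
`{e₁₀, e₁₁, …, e_{m0}, e_{m1}}` then `N = U ⊕ c¹U ⊕ ⋯ ⊕ c^{n-1}U`. -/
theorem quasiQnFiliform_quasiCyclic
    (n d m r : ℕ) (hn : n = 2 * d + 1) (hd : 2 ≤ d)
    (hm : 1 ≤ m) (hr : 1 ≤ r) (hrm : r ≤ m)
    (N : Type*) [LieRing N] [LieAlgebra ℂ N] (Q : QuasiQnFiliform n m r N)
    (U : Submodule ℂ N)
    (hU : U = Submodule.span ℂ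
      {v | ∃ i, 1 ≤ i ∧ i ≤ m ∧ (v = Q.e i 0 ∨ v = Q.e i 1)}) :
    (⨆ i : Fin n, cPow U (i : ℕ)) = ⊤ ∧ iSupIndep (fun i : Fin n => cPow U (i : ℕ)) :=
  quasiQnFiliform_quasiCyclic_general n d m r hn hd hrm N Q U hU
end

section
/- Let N = N(Q_n, m) be a quasi Q_n-filiform Lie algebra. Then {e_{10}, e_{11}, e_{20}, e_{21}, ..., e_{m0}, e_{m1}} is a minimal system of generators of N. -/
open Finset

/-!
Inside each component, `ad e_{i0}` carries `e_{i1}` up to `e_{i,n-1}` and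
`e_{in} = -[e_{i1}, e_{i,n-1}]`, so the generators reach the whole basis.

For minimality, every bracket lies in the span of the `e_{aj}` with `j ≥ 2`. The `e_{an}`
lie in `c^{n-1} N`, which has dimension `r` and hence is spanned by `e_{1n}, …, e_{rn}`. So
for a generator `e_{ij₀}` (`j₀ ≤ 1`), the span `K` of the other basis vectors contains all
brackets and all other `e_{aj}`: it is a subalgebra containing the remaining generators
but not `e_{ij₀}`.
-/

theorem LieSubalgebra.lieSpan_toSubmodule_le {R L : Type*} [CommRing R] [LieRing L]
    [LieAlgebra R L] {s : Set L} {K : Submodule R L} (hsK : s ⊆ K)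
    (hK : ∀ x y : L, ⁅x, y⁆ ∈ K) : (LieSubalgebra.lieSpan R L s).toSubmodule ≤ K :=
  (LieSubalgebra.lieSpan_le (K := { K with lie_mem' := fun _ _ => hK _ _ })).mpr hsK

theorem lie_mem_of_span_eq_top {R L : Type*} [CommRing R] [LieRing L] [LieAlgebra R L]
    {s : Set L} (hs : Submodule.span R s = ⊤) {K : Submodule R L}
    (hK : ∀ x ∈ s, ∀ y ∈ s, ⁅x, y⁆ ∈ K) (x y : L) : ⁅x, y⁆ ∈ K := by
  have hx : x ∈ Submodule.span R s := hs ▸ Submodule.mem_top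
  have hy : y ∈ Submodule.span R s := hs ▸ Submodule.mem_top
  induction hx, hy using Submodule.span_induction₂ with
  | mem_mem x y hx hy => exact hK x hx y hy
  | zero_left y _ => simp
  | zero_right x _ => simp
  | add_left x y z _ _ _ hxz hyz => simpa [add_lie] using K.add_mem hxz hyz
  | add_right x y z _ _ _ hxy hxz => simpa [lie_add] using K.add_mem hxy hxz
  | smul_left c x y _ _ hxy => simpa [smul_lie] using K.smul_mem c hxy
  | smul_right c x y _ _ hxy => simpa [lie_smul] using K.smul_mem c hxy

namespace QuasiQnFiliform

variable {n m r : ℕ} {N : Type*} [LieRing N] [LieAlgebra ℂ N] (Q : QuasiQnFiliform n m r N)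

theorem e_top_eq_neg_lie (hn : 2 ≤ n) {i : ℕ} (hi : 1 ≤ i) (hi' : i ≤ m) :
    Q.e i n = -⁅Q.e i 1, Q.e i (n - 1)⁆ := by
  rw [Q.bracket_pair i 1 hi hi' le_rfl (by omega)]
  simp

theorem e_mem_of_generators_mem (hn : 2 ≤ n) {i : ℕ} (hi : 1 ≤ i) (hi' : i ≤ m)
    {A : LieSubalgebra ℂ N} (h0 : Q.e i 0 ∈ A) (h1 : Q.e i 1 ∈ A) {j : ℕ} (hj : j ≤ n) :
    Q.e i j ∈ A := by
  have hlow : ∀ j, 1 ≤ j → j ≤ n - 1 → Q.e i j ∈ A := by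
    intro j hj1 hj2
    induction j, hj1 using Nat.le_induction with
    | base => exact h1
    | succ k hk ih =>
      rw [← Q.bracket_e0 i k hi hi' hk (by omega)]
      exact A.lie_mem h0 (ih (by omega))
  rcases Nat.lt_or_ge j 1 with hj0 | hj1
  · rwa [Nat.lt_one_iff.mp hj0]
  rcases Nat.lt_or_ge j n with hjn | hjn
  · exact hlow j hj1 (by omega)
  rw [show j = n by omega, Q.e_top_eq_neg_lie hn hi hi']
  exact neg_mem (A.lie_mem h1 (hlow (n - 1) (by omega) le_rfl))

theorem e_mem_lowerCentralSeries {i : ℕ} (hi : 1 ≤ i) (hi' : i ≤ m) {j : ℕ} (hj : 1 ≤ j)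
    (hj' : j ≤ n - 1) : Q.e i j ∈ LieModule.lowerCentralSeries ℂ N N (j - 1) := by
  induction j, hj using Nat.le_induction with
  | base => exact LieSubmodule.mem_top _
  | succ k hk ih =>
    rw [← Q.bracket_e0 i k hi hi' hk (by omega), show k + 1 - 1 = k - 1 + 1 by omega,
      LieModule.lowerCentralSeries_succ]
    exact LieSubmodule.lie_mem_lie (LieSubmodule.mem_top _) (ih (by omega))

theorem e_top_mem_lowerCentralSeries (hn : 2 ≤ n) {i : ℕ} (hi : 1 ≤ i) (hi' : i ≤ m) :
    Q.e i n ∈ LieModule.lowerCentralSeries ℂ N N (n - 1) := by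
  have h := LieSubmodule.lie_mem_lie (LieSubmodule.mem_top (Q.e i 1))
    (Q.e_mem_lowerCentralSeries hi hi' (j := n - 1) (by omega) le_rfl)
  rw [← LieModule.lowerCentralSeries_succ, show n - 1 - 1 + 1 = n - 1 by omega] at h
  rw [Q.e_top_eq_neg_lie hn hi hi']
  exact neg_mem h

def family : (Fin m × Fin n) ⊕ Fin r → N :=
  Sum.elim (fun p => Q.e ((p.1 : ℕ) + 1) (p.2 : ℕ)) (fun t => Q.e ((t : ℕ) + 1) n)

theorem linearIndependent_family : LinearIndependent ℂ Q.family :=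
  Q.basis_indep

theorem span_range_family : Submodule.span ℂ (Set.range Q.family) = ⊤ :=
  Q.basis_span

theorem exists_family_eq (hrm : r ≤ m) (p : (Fin m × Fin n) ⊕ Fin r) :
    ∃ a j, 1 ≤ a ∧ a ≤ m ∧ j ≤ n ∧ Q.family p = Q.e a j := by
  rcases p with ⟨a, j⟩ | t
  · exact ⟨a + 1, j, by omega, by omega, by omega, rfl⟩
  · exact ⟨t + 1, n, by omega, by omega, le_rfl, rfl⟩

theorem span_e_top_eq_lowerCentralSeries (hn : 2 ≤ n) (hrm : r ≤ m) :
    Submodule.span ℂ (Set.range fun t : Fin r => Q.e ((t : ℕ) + 1) n) =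
      (LieModule.lowerCentralSeries ℂ N N (n - 1)).toSubmodule := by
  have := Q.findim
  have hindep : LinearIndependent ℂ fun t : Fin r => Q.e ((t : ℕ) + 1) n :=
    Q.linearIndependent_family.comp Sum.inr Sum.inr_injective
  apply Submodule.eq_of_le_of_finrank_le
  · rw [Submodule.span_le]
    rintro _ ⟨t, rfl⟩
    exact Q.e_top_mem_lowerCentralSeries hn (by omega) (by omega)
  · rw [finrank_span_eq_card hindep, Fintype.card_fin]
    exact Q.rank_lcs.le

theorem e_top_mem_span (hn : 2 ≤ n) (hrm : r ≤ m) {i : ℕ} (hi : 1 ≤ i) (hi' : i ≤ m) :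
    Q.e i n ∈ Submodule.span ℂ (Set.range fun t : Fin r => Q.e ((t : ℕ) + 1) n) := by
  rw [Q.span_e_top_eq_lowerCentralSeries hn hrm]
  exact Q.e_top_mem_lowerCentralSeries hn hi hi'

theorem lie_e_zero_e_mem {K : Submodule ℂ N}
    (hK : ∀ a j, 1 ≤ a → a ≤ m → 2 ≤ j → j ≤ n → Q.e a j ∈ K) {a k : ℕ} (ha : 1 ≤ a)
    (ha' : a ≤ m) (hk : k ≤ n) : ⁅Q.e a 0, Q.e a k⁆ ∈ K := by
  rcases Nat.lt_or_ge k 1 with hk0 | hk1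
  · rw [Nat.lt_one_iff.mp hk0, lie_self]
    exact K.zero_mem
  rcases Nat.lt_or_ge k (n - 1) with hkn | hkn
  · rw [Q.bracket_e0 a k ha ha' hk1 (by omega)]
    exact hK a (k + 1) ha ha' (by omega) (by omega)
  obtain rfl | rfl : k = n - 1 ∨ k = n := by omega
  · rw [Q.bracket_e0_top a ha ha']
    exact K.zero_mem
  · rw [Q.bracket_e0_n a ha ha']
    exact K.zero_mem

theorem lie_e_e_mem {K : Submodule ℂ N}
    (hK : ∀ a j, 1 ≤ a → a ≤ m → 2 ≤ j → j ≤ n → Q.e a j ∈ K) {a b j k : ℕ} (ha : 1 ≤ a)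
    (ha' : a ≤ m) (hb : 1 ≤ b) (hb' : b ≤ m) (hj : j ≤ n) (hk : k ≤ n) :
    ⁅Q.e a j, Q.e b k⁆ ∈ K := by
  by_cases hab : a = b
  swap
  · rw [Q.bracket_comm a b j k ha ha' hb hb' hab hj hk]
    exact K.zero_mem
  subst hab
  rcases Nat.lt_or_ge j 1 with hj0 | hj1
  · rw [Nat.lt_one_iff.mp hj0]
    exact Q.lie_e_zero_e_mem hK ha ha' hk
  rcases Nat.lt_or_ge k 1 with hk0 | hk1
  · rw [Nat.lt_one_iff.mp hk0, ← lie_skew]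
    exact neg_mem (Q.lie_e_zero_e_mem hK ha ha' hj)
  by_cases hjk : j + k = n
  · rw [show k = n - j by omega, Q.bracket_pair a j ha ha' hj1 (by omega)]
    exact K.smul_mem _ (hK a n ha ha' (by omega) le_rfl)
  · rw [Q.bracket_zero a j k ha ha' hj1 hj hk1 hk hjk]
    exact K.zero_mem

theorem lie_mem_of_e_mem (hrm : r ≤ m) {K : Submodule ℂ N}
    (hK : ∀ a j, 1 ≤ a → a ≤ m → 2 ≤ j → j ≤ n → Q.e a j ∈ K) (x y : N) : ⁅x, y⁆ ∈ K := by
  refine lie_mem_of_span_eq_top Q.span_range_family ?_ x y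
  rintro _ ⟨p, rfl⟩ _ ⟨q, rfl⟩
  obtain ⟨a, j, ha, ha', hj, hp⟩ := Q.exists_family_eq hrm p
  obtain ⟨b, k, hb, hb', hk, hq⟩ := Q.exists_family_eq hrm q
  rw [hp, hq]
  exact Q.lie_e_e_mem hK ha ha' hb hb' hj hk

theorem lieSpan_generators_eq_top (hn : 2 ≤ n) (hrm : r ≤ m) :
    LieSubalgebra.lieSpan ℂ N {v | ∃ i, 1 ≤ i ∧ i ≤ m ∧ (v = Q.e i 0 ∨ v = Q.e i 1)} = ⊤ := by
  set S := {v | ∃ i, 1 ≤ i ∧ i ≤ m ∧ (v = Q.e i 0 ∨ v = Q.e i 1)}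
  set A := LieSubalgebra.lieSpan ℂ N S
  have hfamily : Set.range Q.family ⊆ A := by
    rintro _ ⟨p, rfl⟩
    obtain ⟨a, j, ha, ha', hj, hp⟩ := Q.exists_family_eq hrm p
    rw [hp]
    exact Q.e_mem_of_generators_mem hn ha ha'
      (LieSubalgebra.subset_lieSpan (s := S) ⟨a, ha, ha', .inl rfl⟩)
      (LieSubalgebra.subset_lieSpan (s := S) ⟨a, ha, ha', .inr rfl⟩) hj
  refine eq_top_iff.mpr fun x _ => Submodule.span_le.mpr hfamily ?_
  exact Q.span_range_family ▸ Submodule.mem_top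

theorem e_notMem_span_family_compl (p : Fin m × Fin n) :
    Q.e ((p.1 : ℕ) + 1) p.2 ∉ Submodule.span ℂ (Q.family '' {Sum.inl p}ᶜ) :=
  Q.linearIndependent_family.notMem_span_image (s := {Sum.inl p}ᶜ) (x := .inl p) (by simp)

theorem e_mem_span_family_compl (hn : 2 ≤ n) (hrm : r ≤ m) (p : Fin m × Fin n) {a j : ℕ}
    (ha : 1 ≤ a) (ha' : a ≤ m) (hj : j ≤ n) (hne : (a, j) ≠ ((p.1 : ℕ) + 1, (p.2 : ℕ))) :
    Q.e a j ∈ Submodule.span ℂ (Q.family '' {Sum.inl p}ᶜ) := by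
  rcases Nat.lt_or_ge j n with hjn | hjn
  · have hq : Q.family (.inl (⟨a - 1, by omega⟩, ⟨j, hjn⟩)) = Q.e a j := by
      simp only [family, Sum.elim_inl]
      congr 1
      omega
    rw [← hq]
    refine Submodule.subset_span ⟨_, ?_, rfl⟩
    simp only [ne_eq, Prod.ext_iff] at hne
    simp only [Set.mem_compl_iff, Set.mem_singleton_iff, Sum.inl.injEq, Prod.ext_iff,
      Fin.ext_iff]
    omega
  · rw [show j = n by omega]
    refine Submodule.span_mono ?_ (Q.e_top_mem_span hn hrm ha ha')
    rintro _ ⟨t, rfl⟩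
    exact ⟨.inr t, by simp, rfl⟩

theorem e_notMem_lieSpan (hn : 2 ≤ n) (hrm : r ≤ m) {i jv : ℕ} (hi : 1 ≤ i) (hi' : i ≤ m)
    (hjv : jv ≤ 1) {s : Set N}
    (hs : ∀ x ∈ s, ∃ a j, 1 ≤ a ∧ a ≤ m ∧ j ≤ n ∧ (a, j) ≠ (i, jv) ∧ x = Q.e a j) :
    Q.e i jv ∉ LieSubalgebra.lieSpan ℂ N s := by
  obtain ⟨p, rfl, rfl⟩ : ∃ p : Fin m × Fin n, (p.1 : ℕ) + 1 = i ∧ (p.2 : ℕ) = jv :=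
    ⟨(⟨i - 1, by omega⟩, ⟨jv, by omega⟩), by simp only; omega, rfl⟩
  refine fun h => Q.e_notMem_span_family_compl p (LieSubalgebra.lieSpan_toSubmodule_le ?_ ?_ h)
  · intro x hx
    obtain ⟨a, j, ha, ha', hj, hne, rfl⟩ := hs x hx
    exact Q.e_mem_span_family_compl hn hrm p ha ha' hj hne
  · refine Q.lie_mem_of_e_mem hrm fun a j ha ha' hj hj' => ?_
    refine Q.e_mem_span_family_compl hn hrm p ha ha' hj' ?_
    simp only [ne_eq, Prod.ext_iff]
    omega

end QuasiQnFiliform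

theorem quasiQnFiliform_minimal_generators_general
    (n d m r : ℕ) (hn : n = 2 * d + 1) (hd : 2 ≤ d)
    (hrm : r ≤ m)
    (N : Type*) [LieRing N] [LieAlgebra ℂ N] (Q : QuasiQnFiliform n m r N)
    (S : Set N) (hS : S = {v | ∃ i, 1 ≤ i ∧ i ≤ m ∧ (v = Q.e i 0 ∨ v = Q.e i 1)}) :
    LieSubalgebra.lieSpan ℂ N S = ⊤ ∧
      ∀ s : Set N, s ⊂ S → LieSubalgebra.lieSpan ℂ N s ≠ ⊤ := by
  have hn2 : 2 ≤ n := by omega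
  subst hS
  have hgen : ∀ v ∈ {v | ∃ i, 1 ≤ i ∧ i ≤ m ∧ (v = Q.e i 0 ∨ v = Q.e i 1)},
      ∃ i j, 1 ≤ i ∧ i ≤ m ∧ j ≤ 1 ∧ v = Q.e i j := by
    rintro v ⟨i, hi, hi', rfl | rfl⟩
    exacts [⟨i, 0, hi, hi', zero_le_one, rfl⟩, ⟨i, 1, hi, hi', le_rfl, rfl⟩]
  refine ⟨Q.lieSpan_generators_eq_top hn2 hrm, fun s hs htop => ?_⟩
  obtain ⟨_, hvS, hvs⟩ := Set.exists_of_ssubset hs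
  obtain ⟨i, jv, hi, hi', hjv, rfl⟩ := hgen _ hvS
  refine Q.e_notMem_lieSpan hn2 hrm hi hi' hjv (fun x hx => ?_) (by rw [htop]; trivial)
  obtain ⟨a, j, ha, ha', hj, rfl⟩ := hgen x (hs.1 hx)
  refine ⟨a, j, ha, ha', by omega, fun h => hvs ?_, rfl⟩
  obtain ⟨rfl, rfl⟩ := Prod.mk.inj h
  exact hx

/-- `{e₁₀, e₁₁, e₂₀, e₂₁, …, e_{m0}, e_{m1}}` is a minimal system of generators of the
quasi `Qₙ`-filiform Lie algebra `N = N(Qₙ, m)`: it generates `N` as a Lie algebra and no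
proper subset of it does. -/
theorem quasiQnFiliform_minimal_generators
    (n d m r : ℕ) (hn : n = 2 * d + 1) (hd : 2 ≤ d)
    (hm : 1 ≤ m) (hr : 1 ≤ r) (hrm : r ≤ m)
    (N : Type*) [LieRing N] [LieAlgebra ℂ N] (Q : QuasiQnFiliform n m r N)
    (S : Set N) (hS : S = {v | ∃ i, 1 ≤ i ∧ i ≤ m ∧ (v = Q.e i 0 ∨ v = Q.e i 1)}) :
    LieSubalgebra.lieSpan ℂ N S = ⊤ ∧
      ∀ s : Set N, s ⊂ S → LieSubalgebra.lieSpan ℂ N s ≠ ⊤ :=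
  quasiQnFiliform_minimal_generators_general n d m r hn hd hrm N Q S hS
end

section
/- Let N = N(Q_n, m, r) be a quasi Q_n-filiform Lie algebra and δ a derivation of N. Then for every 1 ≤ s ≤ m and every 2 ≤ t ≤ n-1, δ e_{st} = λ_{s,t-1} e_{st} + Σ_{j=2}^{n-t} c^{s1}_{sj} e_{s,j+t-1} + (-1)^t c^{s0}_{s,n-t+1} e_{sn}, where λ_{s,t-1} = (t-1)·c^{s0}_{s0} + c^{s1}_{s1}. -/
/-!
Since `e_{s,t+1} = ⁅e_{s0}, e_{st}⁆`, the Leibniz rule gives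
`δ e_{s,t+1} = ⁅e_{s0}, δ e_{st}⁆ + ⁅δ e_{s0}, e_{st}⁆`, and the formula follows by induction
on `t`. In `⁅δ e_{s0}, e_{st}⁆` only the coordinates along `e_{s0}` and along the partner
`e_{s,n-t}` of `e_{st}` survive, the vectors `e_{in}` being central; the resulting sign
`(-1)^(n-t)` equals `(-1)^(t+1)` because `n` is odd.
-/

open Finset

namespace QuasiQnFiliform

variable {n m r : ℕ} {N : Type*} [LieRing N] [LieAlgebra ℂ N] (Q : QuasiQnFiliform n m r N)

def ofCoords (a : ℕ → ℕ → ℂ) : N :=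
  ∑ i ∈ Icc 1 m, ∑ j ∈ range n, a i j • Q.e i j + ∑ i ∈ Icc 1 r, a i n • Q.e i n

theorem e_top_lie_e {i s u : ℕ} (hi : 1 ≤ i) (him : i ≤ m) (hs : 1 ≤ s) (hsm : s ≤ m)
    (hu : u ≤ n) : ⁅Q.e i n, Q.e s u⁆ = 0 := by
  rcases eq_or_ne i s with rfl | hne
  · rcases Nat.eq_zero_or_pos u with rfl | hu0
    · rw [← lie_skew, Q.bracket_e0_n i hi him, neg_zero]
    · exact Q.bracket_zero i n u hi him (by omega) le_rfl hu0 hu (by omega)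
  · exact Q.bracket_comm i s n u hi him hs hsm hne le_rfl hu

theorem e_sub_lie_e {s u : ℕ} (hs : 1 ≤ s) (hsm : s ≤ m) (hu : 1 ≤ u) (hun : u ≤ n - 1) :
    ⁅Q.e s (n - u), Q.e s u⁆ = (-1 : ℂ) ^ (n - u) • Q.e s n := by
  have h := Q.bracket_pair s (n - u) hs hsm (by omega) (by omega)
  rwa [Nat.sub_sub_self (by omega)] at h

theorem ofCoords_lie_e (hrm : r ≤ m) (a : ℕ → ℕ → ℂ) {s u : ℕ} (hs : 1 ≤ s) (hsm : s ≤ m)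
    (hu : u ≤ n) : ⁅Q.ofCoords a, Q.e s u⁆ = ∑ j ∈ range n, a s j • ⁅Q.e s j, Q.e s u⁆ := by
  have hcentral : ∑ i ∈ Icc 1 r, ⁅a i n • Q.e i n, Q.e s u⁆ = 0 :=
    sum_eq_zero fun i hi => by
      rw [mem_Icc] at hi
      rw [smul_lie, Q.e_top_lie_e hi.1 (hi.2.trans hrm) hs hsm hu, smul_zero]
  have hother : ∀ i ∈ Icc 1 m, i ≠ s → ⁅∑ j ∈ range n, a i j • Q.e i j, Q.e s u⁆ = 0 :=
    fun i hi hne => by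
      rw [mem_Icc] at hi
      refine (sum_lie _ _ _).trans (sum_eq_zero fun j hj => ?_)
      rw [mem_range] at hj
      rw [smul_lie, Q.bracket_comm i s j u hi.1 hi.2 hs hsm hne hj.le hu, smul_zero]
  rw [ofCoords, add_lie, sum_lie, sum_lie, hcentral, add_zero,
    sum_eq_single_of_mem s (mem_Icc.mpr ⟨hs, hsm⟩) hother, sum_lie]
  simp only [smul_lie]

theorem e_lie_ofCoords (hrm : r ≤ m) (a : ℕ → ℕ → ℂ) {s u : ℕ} (hs : 1 ≤ s) (hsm : s ≤ m)
    (hu : u ≤ n) : ⁅Q.e s u, Q.ofCoords a⁆ = ∑ j ∈ range n, a s j • ⁅Q.e s u, Q.e s j⁆ := by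
  rw [← lie_skew, Q.ofCoords_lie_e hrm a hs hsm hu, ← sum_neg_distrib]
  simp only [← smul_neg, lie_skew]

theorem ofCoords_lie_e_of_le (hrm : r ≤ m) (a : ℕ → ℕ → ℂ) {s u : ℕ} (hs : 1 ≤ s)
    (hsm : s ≤ m) (hu : 1 ≤ u) (hun : u ≤ n - 2) :
    ⁅Q.ofCoords a, Q.e s u⁆
      = a s 0 • Q.e s (u + 1) + ((-1 : ℂ) ^ (n - u) * a s (n - u)) • Q.e s n := by
  rw [Q.ofCoords_lie_e hrm a hs hsm (by omega),
    sum_eq_add_of_mem 0 (n - u) (by simp; omega) (by simp; omega) (by omega) fun j hj hj' => ?_,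
    Q.bracket_e0 s u hs hsm hu hun, Q.e_sub_lie_e hs hsm hu (by omega), smul_smul, mul_comm]
  rw [mem_range] at hj
  rw [Q.bracket_zero s j u hs hsm (by omega) hj.le hu (by omega) (by omega), smul_zero]

theorem e_zero_lie_ofCoords (hrm : r ≤ m) (a : ℕ → ℕ → ℂ) {s : ℕ} (hs : 1 ≤ s)
    (hsm : s ≤ m) : ⁅Q.e s 0, Q.ofCoords a⁆ = ∑ j ∈ Icc 1 (n - 2), a s j • Q.e s (j + 1) := by
  have hsub : Icc 1 (n - 2) ⊆ range n := fun j hj => by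
    rw [mem_Icc] at hj
    rw [mem_range]
    omega
  have hvanish : ∀ j ∈ range n, j ∉ Icc 1 (n - 2) → a s j • ⁅Q.e s 0, Q.e s j⁆ = 0 :=
    fun j hj hj' => by
      rw [mem_range] at hj
      rw [mem_Icc] at hj'
      obtain rfl | rfl : j = 0 ∨ j = n - 1 := by omega
      · rw [lie_self, smul_zero]
      · rw [Q.bracket_e0_top s hs hsm, smul_zero]
  rw [Q.e_lie_ofCoords hrm a hs hsm (Nat.zero_le n), ← sum_subset hsub hvanish]
  refine sum_congr rfl fun j hj => ?_
  rw [mem_Icc] at hj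
  rw [Q.bracket_e0 s j hs hsm hj.1 hj.2]

theorem e_zero_lie_sum_Icc (b : ℕ → ℂ) {s k : ℕ} (hs : 1 ≤ s) (hsm : s ≤ m) (hk : 1 ≤ k)
    (hkn : k + 2 ≤ n) :
    ⁅Q.e s 0, ∑ j ∈ Icc 2 (n - k), b j • Q.e s (j + k - 1)⁆
      = ∑ j ∈ Icc 2 (n - (k + 1)), b j • Q.e s (j + (k + 1) - 1) := by
  have hsplit : Icc 2 (n - k) = insert (n - k) (Icc 2 (n - (k + 1))) := by
    ext j
    simp only [mem_Icc, mem_insert]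
    omega
  rw [lie_sum, hsplit, sum_insert (by simp; omega), lie_smul, Nat.sub_add_cancel (by omega),
    Q.bracket_e0_top s hs hsm, smul_zero, zero_add]
  refine sum_congr rfl fun j hj => ?_
  rw [mem_Icc] at hj
  rw [lie_smul, Q.bracket_e0 s (j + k - 1) hs hsm (by omega) (by omega),
    show j + k - 1 + 1 = j + (k + 1) - 1 by omega]

theorem derivation_apply_e_succ (hrm : r ≤ m) (δ : LieDerivation ℂ N N) (a : ℕ → ℕ → ℂ)
    {s u : ℕ} (hs : 1 ≤ s) (hsm : s ≤ m) (hδ : δ (Q.e s 0) = Q.ofCoords a) (hu : 1 ≤ u)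
    (hun : u ≤ n - 2) :
    δ (Q.e s (u + 1)) = ⁅Q.e s 0, δ (Q.e s u)⁆
      + (a s 0 • Q.e s (u + 1) + ((-1 : ℂ) ^ (n - u) * a s (n - u)) • Q.e s n) := by
  rw [← Q.bracket_e0 s u hs hsm hu hun, δ.apply_lie_eq_add, hδ,
    Q.ofCoords_lie_e_of_le hrm a hs hsm hu hun, Q.bracket_e0 s u hs hsm hu hun]

end QuasiQnFiliform

open Finset in
theorem derivation_apply_e_middle_general
    (n d m r : ℕ) (hn : n = 2 * d + 1)
    (hrm : r ≤ m)
    (N : Type*) [LieRing N] [LieAlgebra ℂ N] (Q : QuasiQnFiliform n m r N)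
    (δ : LieDerivation ℂ N N) (c : ℕ → ℕ → ℕ → ℕ → ℂ)
    (hc : ∀ s t, 1 ≤ s → s ≤ m → t ≤ 1 →
      δ (Q.e s t) = ∑ i ∈ Icc 1 m, ∑ j ∈ range n, c s t i j • Q.e i j
        + ∑ i ∈ Icc 1 r, c s t i n • Q.e i n) :
    ∀ s t, 1 ≤ s → s ≤ m → 2 ≤ t → t ≤ n - 1 →
      δ (Q.e s t) = (((t - 1 : ℕ) : ℂ) * c s 0 s 0 + c s 1 s 1) • Q.e s t
        + ∑ j ∈ Icc 2 (n - t), c s 1 s j • Q.e s (j + t - 1)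
        + ((-1 : ℂ) ^ t * c s 0 s (n - t + 1)) • Q.e s n := by
  intro s t hs hsm ht
  have hδ₀ : δ (Q.e s 0) = Q.ofCoords (c s 0) := hc s 0 hs hsm (Nat.zero_le 1)
  have hδ₁ : δ (Q.e s 1) = Q.ofCoords (c s 1) := hc s 1 hs hsm le_rfl
  have hsign (u : ℕ) (hu : u ≤ n) : (-1 : ℂ) ^ (n - u) = (-1) ^ (u + 1) :=
    neg_one_pow_congr (by simp only [Nat.even_iff]; omega)
  induction t, ht using Nat.le_induction with
  | base =>
    intro htn
    have hsplit : Icc 1 (n - 2) = insert 1 (Icc 2 (n - 2)) := by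
      ext j
      simp only [mem_Icc, mem_insert]
      omega
    rw [Q.derivation_apply_e_succ hrm δ (c s 0) hs hsm hδ₀ le_rfl (by omega),
      hδ₁, Q.e_zero_lie_ofCoords hrm (c s 1) hs hsm, hsplit, sum_insert (by simp),
      hsign 1 (by omega), show n - 2 + 1 = n - 1 by omega]
    simp only [Nat.reduceAdd, Nat.cast_one, Nat.add_one_sub_one]
    module
  | succ t ht ih =>
    intro htn
    rw [Q.derivation_apply_e_succ hrm δ (c s 0) hs hsm hδ₀ (by omega)
        (by omega), ih (by omega), lie_add, lie_add, lie_smul, lie_smul,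
      Q.bracket_e0 s t hs hsm (by omega) (by omega), Q.bracket_e0_n s hs hsm, smul_zero,
      add_zero, Q.e_zero_lie_sum_Icc _ hs hsm (by omega) (by omega), hsign t (by omega),
      show n - (t + 1) + 1 = n - t by omega]
    have hcast : ((t + 1 - 1 : ℕ) : ℂ) = ((t - 1 : ℕ) : ℂ) + 1 := by
      rw [Nat.add_sub_cancel]
      push_cast [Nat.cast_sub (by omega : 1 ≤ t)]
      ring
    rw [hcast]
    module

open Finset in
/-- Let `δ` be a derivation of a quasi `Qₙ`-filiform Lie algebra `N = N(Qₙ, m, r)`, with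
`δ e_{st} = Σ_{i=1}^m Σ_{j=0}^{n-1} c^{st}_{ij} e_{ij} + Σ_{i=1}^r c^{st}_{in} e_{in}`
for `t = 0, 1`.  Then for all `1 ≤ s ≤ m` and `2 ≤ t ≤ n - 1`,
`δ e_{st} = λ_{s,t-1} e_{st} + Σ_{j=2}^{n-t} c^{s1}_{sj} e_{s,j+t-1}
  + (-1)^t c^{s0}_{s,n-t+1} e_{sn}`,
where `λ_{s,t-1} = (t-1) c^{s0}_{s0} + c^{s1}_{s1}`. -/
theorem derivation_apply_e_middle
    (n d m r : ℕ) (hn : n = 2 * d + 1) (hd : 2 ≤ d)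
    (hm : 1 ≤ m) (hr : 1 ≤ r) (hrm : r ≤ m)
    (N : Type*) [LieRing N] [LieAlgebra ℂ N] (Q : QuasiQnFiliform n m r N)
    (δ : LieDerivation ℂ N N) (c : ℕ → ℕ → ℕ → ℕ → ℂ)
    (hc : ∀ s t, 1 ≤ s → s ≤ m → t ≤ 1 →
      δ (Q.e s t) = ∑ i ∈ Icc 1 m, ∑ j ∈ range n, c s t i j • Q.e i j
        + ∑ i ∈ Icc 1 r, c s t i n • Q.e i n) :
    ∀ s t, 1 ≤ s → s ≤ m → 2 ≤ t → t ≤ n - 1 →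
      δ (Q.e s t) = (((t - 1 : ℕ) : ℂ) * c s 0 s 0 + c s 1 s 1) • Q.e s t
        + ∑ j ∈ Icc 2 (n - t), c s 1 s j • Q.e s (j + t - 1)
        + ((-1 : ℂ) ^ t * c s 0 s (n - t + 1)) • Q.e s n :=
  derivation_apply_e_middle_general n d m r hn hrm N Q δ c hc
end

section
/- Let N = N(Q_n, m, r) be a quasi Q_n-filiform Lie algebra with e_{in} = Σ_{j=1}^r b_{ji} e_{jn}. Let δ be the linear transformation of N determined by prescribing δ e_{s0} and δ e_{s1} for each 1 ≤ s ≤ m (with coefficients c^{st}_{ij}) and extending by δ e_{st} = [δ e_{s0}, e_{s,t-1}] + [e_{s0}, δ e_{s,t-1}] for 2 ≤ t ≤ n-1 and δ e_{sn} = -[δ e_{s1}, e_{s,n-1}] - [e_{s1}, δ e_{s,n-1}] for 1 ≤ s ≤ r. Then δ is a derivation of N if and only if for all 1 ≤ s, p ≤ m the following hold: (2.1) b_{sj}(λ_s - λ_j) = 0 for all s > r and 1 ≤ j ≤ r; (2.2) δ e_{s0} = c^{s0}_{s0} e_{s0} + Σ_{i=2}^{n-1} c^{s0}_{si} e_{si}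 + Σ_{i=1}^r c^{s0}_{in} e_{in}; (2.3) δ e_{s1} = Σ_{i=1}^{n-2} c^{s1}_{si} e_{si} + Σ_{i=1}^m c^{s1}_{i,n-1} e_{i,n-1} + Σ_{i=1}^r c^{s1}_{in} e_{in}; (2.4) c^{s1}_{si} = 0 for i = 3, 5, ..., n-2; (2.5) c^{s1}_{p,n-1} b_{pj} - c^{p1}_{s,n-1} b_{sj} = 0 for all 1 ≤ j ≤ r, where λ_s = (n-2)·c^{s0}_{s0} + 2·c^{s1}_{s1}. -/
open Finset

section Infra

variable {n m r : ℕ} {N : Type*} [LieRing N] [LieAlgebra ℂ N]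

/-- canonical grid combination -/
def csum (Q : QuasiQnFiliform n m r N) (F : ℕ → ℕ → ℂ) : N :=
  ∑ i ∈ Icc 1 m, ∑ j ∈ range n, F i j • Q.e i j

/-- canonical tail combination -/
def esum (Q : QuasiQnFiliform n m r N) (G : ℕ → ℂ) : N :=
  ∑ i ∈ Icc 1 r, G i • Q.e i n

variable (Q : QuasiQnFiliform n m r N)

lemma csum_congr {F F' : ℕ → ℕ → ℂ} (h : ∀ i j, 1 ≤ i → i ≤ m → j < n → F i j = F' i j) :
    csum Q F = csum Q F' := by
  unfold csum
  refine Finset.sum_congr rfl fun i hi => Finset.sum_congr rfl fun j hj => ?_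
  rw [mem_Icc] at hi; rw [mem_range] at hj
  rw [h i j hi.1 hi.2 hj]

lemma esum_congr {G G' : ℕ → ℂ} (h : ∀ i, 1 ≤ i → i ≤ r → G i = G' i) :
    esum Q G = esum Q G' := by
  unfold esum
  refine Finset.sum_congr rfl fun i hi => ?_
  rw [mem_Icc] at hi
  rw [h i hi.1 hi.2]

lemma csum_add (F F' : ℕ → ℕ → ℂ) :
    csum Q F + csum Q F' = csum Q (fun i j => F i j + F' i j) := by
  simp [csum, add_smul, Finset.sum_add_distrib]

lemma esum_add (G G' : ℕ → ℂ) :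
    esum Q G + esum Q G' = esum Q (fun i => G i + G' i) := by
  simp [esum, add_smul, Finset.sum_add_distrib]

lemma csum_sub (F F' : ℕ → ℕ → ℂ) :
    csum Q F - csum Q F' = csum Q (fun i j => F i j - F' i j) := by
  simp [csum, sub_smul, Finset.sum_sub_distrib]

lemma esum_sub (G G' : ℕ → ℂ) :
    esum Q G - esum Q G' = esum Q (fun i => G i - G' i) := by
  simp [esum, sub_smul, Finset.sum_sub_distrib]

lemma single_csum (x : ℂ) (p u : ℕ) (hp1 : 1 ≤ p) (hpm : p ≤ m) (hu : u < n) :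
    x • Q.e p u = csum Q (fun i j => if i = p ∧ j = u then x else 0) := by
  unfold csum
  rw [Finset.sum_eq_single_of_mem p (by rw [mem_Icc]; exact ⟨hp1, hpm⟩)
    (fun i _ hi => Finset.sum_eq_zero fun j _ => by simp [hi])]
  rw [Finset.sum_eq_single_of_mem u (by rw [mem_range]; exact hu)
    (fun j _ hj => by simp [hj])]
  simp

lemma single_esum (x : ℂ) (p : ℕ) (hp1 : 1 ≤ p) (hpr : p ≤ r) :
    x • Q.e p n = esum Q (fun i => if i = p then x else 0) := by
  unfold esum
  rw [Finset.sum_eq_single_of_mem p (by rw [mem_Icc]; exact ⟨hp1, hpr⟩)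
    (fun i _ hi => by simp [hi])]
  simp

lemma seg_csum (g : ℕ → ℂ) (p a b : ℕ) (hp1 : 1 ≤ p) (hpm : p ≤ m) (hb : b < n) :
    ∑ j ∈ Icc a b, g j • Q.e p j
      = csum Q (fun i j => if i = p ∧ a ≤ j ∧ j ≤ b then g j else 0) := by
  unfold csum
  rw [Finset.sum_eq_single_of_mem p (by rw [mem_Icc]; exact ⟨hp1, hpm⟩)
    (fun i _ hi => Finset.sum_eq_zero fun j _ => by simp [hi])]
  simp only [true_and]
  have hsub : Icc a b ⊆ range n := fun j hj => mem_range.2 (by rw [mem_Icc] at hj; omega)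
  rw [← Finset.sum_subset hsub
    (fun j _ hj => by
      have : ¬(a ≤ j ∧ j ≤ b) := by simpa [mem_Icc] using hj
      rw [if_neg this, zero_smul])]
  refine Finset.sum_congr rfl fun j hj => ?_
  rw [mem_Icc] at hj
  rw [if_pos hj]

lemma csum_neg (F : ℕ → ℕ → ℂ) : -csum Q F = csum Q (fun i j => -F i j) := by
  simp [csum, neg_smul]

lemma esum_neg (G : ℕ → ℂ) : -esum Q G = esum Q (fun i => -G i) := by
  simp [esum, neg_smul]

lemma zero_csum : (0 : N) = csum Q (fun _ _ => 0) := by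
  simp [csum]

lemma zero_esum : (0 : N) = esum Q (fun _ => 0) := by
  simp [esum]

end Infra
section Infra2

variable {n m r : ℕ} {N : Type*} [LieRing N] [LieAlgebra ℂ N]

lemma sum_Icc_one {α : Type*} [AddCommMonoid α] (M : ℕ) (f : ℕ → α) :
    ∑ i ∈ Icc 1 M, f i = ∑ a : Fin M, f ((a : ℕ) + 1) := by
  rw [Fin.sum_univ_eq_sum_range (fun a => f (a + 1)) M]
  rw [← Finset.Ico_add_one_right_eq_Icc, Finset.sum_Ico_eq_sum_range]
  simp [add_comm]

variable (Q : QuasiQnFiliform n m r N)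

lemma extract (F : ℕ → ℕ → ℂ) (G : ℕ → ℂ)
    (h : csum Q F + esum Q G = 0) :
    (∀ i j, 1 ≤ i → i ≤ m → j < n → F i j = 0) ∧ (∀ i, 1 ≤ i → i ≤ r → G i = 0) := by
  classical
  have li := Q.basis_indep
  rw [Fintype.linearIndependent_iff] at li
  set g : (Fin m × Fin n) ⊕ Fin r → ℂ :=
    Sum.elim (fun p : Fin m × Fin n => F ((p.1 : ℕ) + 1) (p.2 : ℕ))
      (fun t : Fin r => G ((t : ℕ) + 1)) with hg
  have hzero : ∑ x, g x • (Sum.elim (fun p : Fin m × Fin n => Q.e ((p.1 : ℕ) + 1) (p.2 : ℕ))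
      (fun t : Fin r => Q.e ((t : ℕ) + 1) n)) x = 0 := by
    rw [Fintype.sum_sum_type]
    have h1 : (∑ p : Fin m × Fin n,
        g (Sum.inl p) • Q.e ((p.1 : ℕ) + 1) (p.2 : ℕ)) = csum Q F := by
      rw [Fintype.sum_prod_type]
      unfold csum
      rw [sum_Icc_one m]
      refine Finset.sum_congr rfl fun a _ => ?_
      rw [← Fin.sum_univ_eq_sum_range (fun j => F ((a : ℕ) + 1) j • Q.e ((a : ℕ) + 1) j) n]
      simp [hg]
    have h2 : (∑ t : Fin r, g (Sum.inr t) • Q.e ((t : ℕ) + 1) n) = esum Q G := by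
      unfold esum
      rw [sum_Icc_one r]
      simp [hg]
    simpa [h1, h2] using h
  have key := li g hzero
  constructor
  · intro i j hi1 him hj
    have := key (Sum.inl (⟨i - 1, by omega⟩, ⟨j, hj⟩))
    simpa [hg, Nat.sub_add_cancel hi1] using this
  · intro i hi1 hir
    have := key (Sum.inr ⟨i - 1, by omega⟩)
    simpa [hg, Nat.sub_add_cancel hi1] using this

lemma extract_eq (F F' : ℕ → ℕ → ℂ) (G G' : ℕ → ℂ)
    (h : csum Q F + esum Q G = csum Q F' + esum Q G') :
    (∀ i j, 1 ≤ i → i ≤ m → j < n → F i j = F' i j) ∧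
      (∀ i, 1 ≤ i → i ≤ r → G i = G' i) := by
  have h0 : csum Q (fun i j => F i j - F' i j) + esum Q (fun i => G i - G' i) = 0 := by
    rw [← csum_sub, ← esum_sub]
    rw [show csum Q F - csum Q F' + (esum Q G - esum Q G')
      = (csum Q F + esum Q G) - (csum Q F' + esum Q G') by abel, h, sub_self]
  obtain ⟨h1, h2⟩ := extract Q _ _ h0
  exact ⟨fun i j a b c => sub_eq_zero.mp (h1 i j a b c),
    fun i a b => sub_eq_zero.mp (h2 i a b)⟩

lemma en_ne_zero (s : ℕ) (hs1 : 1 ≤ s) (hsm : s ≤ m) : Q.e s n ≠ 0 := by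
  have := (Q.indep_comp s hs1 hsm).ne_zero ⟨n, Nat.lt_succ_self n⟩
  simpa using this

variable (b : ℕ → ℕ → ℂ)
  (hb : ∀ i, 1 ≤ i → i ≤ m → Q.e i n = ∑ j ∈ Icc 1 r, b j i • Q.e j n)

include hb in
lemma en_esum (x : ℂ) (s : ℕ) (hs1 : 1 ≤ s) (hsm : s ≤ m) :
    x • Q.e s n = esum Q (fun j => x * b j s) := by
  rw [hb s hs1 hsm, Finset.smul_sum]
  unfold esum
  exact Finset.sum_congr rfl fun j _ => (smul_smul x (b j s) (Q.e j n))

include hb in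
lemma exists_b_ne (s : ℕ) (hs1 : 1 ≤ s) (hsm : s ≤ m) :
    ∃ j, 1 ≤ j ∧ j ≤ r ∧ b j s ≠ 0 := by
  by_contra hcon
  push_neg at hcon
  apply en_ne_zero Q s hs1 hsm
  rw [hb s hs1 hsm]
  refine Finset.sum_eq_zero fun j hj => ?_
  rw [mem_Icc] at hj
  rcases em (b j s = 0) with h | h
  · rw [h, zero_smul]
  · exact absurd h (by simpa using hcon j hj.1 hj.2)

include hb in
lemma coeff_en_zero (x : ℂ) (s : ℕ) (hs1 : 1 ≤ s) (hsm : s ≤ m)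
    (hall : ∀ j, 1 ≤ j → j ≤ r → x * b j s = 0) : x = 0 := by
  obtain ⟨j, h1, h2, h3⟩ := exists_b_ne Q b hb s hs1 hsm
  rcases mul_eq_zero.1 (hall j h1 h2) with h | h
  · exact h
  · exact absurd h h3

end Infra2
section Infra3

variable {n m r : ℕ} {N : Type*} [LieRing N] [LieAlgebra ℂ N]
variable (Q : QuasiQnFiliform n m r N)

lemma sum_range_eq_pair (M : ℕ) (f : ℕ → N) (a b : ℕ) (ha : a < M) (hb : b < M)
    (hab : a ≠ b) (h : ∀ j, j < M → j ≠ a → j ≠ b → f j = 0) :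
    ∑ j ∈ range M, f j = f a + f b := by
  classical
  have hsub : ({a, b} : Finset ℕ) ⊆ range M := by
    intro x hx
    rcases Finset.mem_insert.1 hx with h' | h'
    · subst h'; exact mem_range.2 ha
    · rw [Finset.mem_singleton] at h'; subst h'; exact mem_range.2 hb
  rw [← Finset.sum_subset hsub (fun j hj hnj => by
    rw [Finset.mem_insert, Finset.mem_singleton] at hnj
    push_neg at hnj
    exact h j (mem_range.1 hj) hnj.1 hnj.2)]
  rw [Finset.sum_pair hab]

omit [LieAlgebra ℂ N] in
lemma sum_lie' {ι : Type*} (s : Finset ι) (f : ι → N) (y : N) :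
    ⁅∑ i ∈ s, f i, y⁆ = ∑ i ∈ s, ⁅f i, y⁆ :=
  map_sum (AddMonoidHom.mk' (fun x => ⁅x, y⁆) (fun a b => add_lie a b y)) f s

variable (hn5 : 5 ≤ n) (hodd : Odd n) (hrm : r ≤ m)

include hn5 in
lemma en_bracket (i p u : ℕ) (hi1 : 1 ≤ i) (him : i ≤ m) (hp1 : 1 ≤ p) (hpm : p ≤ m)
    (hu : u ≤ n) : ⁅Q.e i n, Q.e p u⁆ = 0 := by
  rcases eq_or_ne i p with rfl | hne
  · rcases Nat.eq_zero_or_pos u with rfl | hu1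
    · rw [← lie_skew, Q.bracket_e0_n i hi1 him, neg_zero]
    · exact Q.bracket_zero i n u hi1 him (by omega) le_rfl hu1 hu (by omega)
  · exact Q.bracket_comm i p n u hi1 him hp1 hpm hne le_rfl hu

include hn5 hrm in
lemma esum_bracket (G : ℕ → ℂ) (p u : ℕ) (hp1 : 1 ≤ p) (hpm : p ≤ m) (hu : u ≤ n) :
    ⁅esum Q G, Q.e p u⁆ = 0 := by
  unfold esum
  rw [sum_lie']
  refine Finset.sum_eq_zero fun i hi => ?_
  rw [mem_Icc] at hi
  rw [smul_lie, en_bracket Q hn5 i p u hi.1 (le_trans hi.2 hrm) hp1 hpm hu, smul_zero]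

lemma L0 (F : ℕ → ℕ → ℂ) (p u : ℕ) (hp1 : 1 ≤ p) (hpm : p ≤ m) (hu : u ≤ n) :
    ⁅csum Q F, Q.e p u⁆ = ∑ j ∈ range n, F p j • ⁅Q.e p j, Q.e p u⁆ := by
  unfold csum
  rw [sum_lie']
  rw [Finset.sum_eq_single_of_mem p (by rw [mem_Icc]; exact ⟨hp1, hpm⟩)
    (fun i hi hne => by
      rw [sum_lie']
      refine Finset.sum_eq_zero fun j hj => ?_
      rw [mem_Icc] at hi; rw [mem_range] at hj
      rw [smul_lie, Q.bracket_comm i p j u hi.1 hi.2 hp1 hpm hne (by omega) hu, smul_zero])]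
  rw [sum_lie']
  exact Finset.sum_congr rfl fun j _ => smul_lie _ _ _

include hn5 in
lemma Lzero (F : ℕ → ℕ → ℂ) (p : ℕ) (hp1 : 1 ≤ p) (hpm : p ≤ m) :
    ⁅csum Q F, Q.e p 0⁆ = -∑ j ∈ Icc 1 (n - 2), F p j • Q.e p (j + 1) := by
  rw [L0 Q F p 0 hp1 hpm (by omega)]
  have hsub : Icc 1 (n - 2) ⊆ range n := fun j hj => mem_range.2 (by
    rw [mem_Icc] at hj; omega)
  rw [← Finset.sum_subset hsub (fun j hj hnj => by
    rw [mem_range] at hj; rw [mem_Icc] at hnj; push_neg at hnj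
    rcases Nat.eq_zero_or_pos j with rfl | hj1
    · rw [lie_self, smul_zero]
    · have hjn : j = n - 1 := by omega
      subst hjn
      rw [← lie_skew, Q.bracket_e0_top p hp1 hpm, neg_zero, smul_zero])]
  rw [← Finset.sum_neg_distrib]
  refine Finset.sum_congr rfl fun j hj => ?_
  rw [mem_Icc] at hj
  rw [← lie_skew, Q.bracket_e0 p j hp1 hpm hj.1 hj.2, smul_neg]

include hn5 in
lemma Lmid (F : ℕ → ℕ → ℂ) (p u : ℕ) (hp1 : 1 ≤ p) (hpm : p ≤ m) (hu1 : 1 ≤ u)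
    (hu2 : u ≤ n - 2) :
    ⁅csum Q F, Q.e p u⁆
      = F p 0 • Q.e p (u + 1) + ((-1 : ℂ) ^ (n - u) * F p (n - u)) • Q.e p n := by
  rw [L0 Q F p u hp1 hpm (by omega)]
  rw [sum_range_eq_pair n _ 0 (n - u) (by omega) (by omega) (by omega)
    (fun j hj hj0 hjn => by
      rw [Q.bracket_zero p j u hp1 hpm (by omega) (by omega) hu1 (by omega) (by omega),
        smul_zero])]
  congr 1
  · rw [Q.bracket_e0 p u hp1 hpm hu1 hu2]
  · have hpair := Q.bracket_pair p (n - u) hp1 hpm (by omega) (by omega)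
    rw [Nat.sub_sub_self (by omega : u ≤ n)] at hpair
    rw [hpair, smul_smul, mul_comm]

include hn5 in
lemma Ltop (F : ℕ → ℕ → ℂ) (p : ℕ) (hp1 : 1 ≤ p) (hpm : p ≤ m) :
    ⁅csum Q F, Q.e p (n - 1)⁆ = (-(F p 1)) • Q.e p n := by
  rw [L0 Q F p (n - 1) hp1 hpm (by omega)]
  rw [Finset.sum_eq_single_of_mem 1 (mem_range.2 (by omega))
    (fun j hj hne => by
      rw [mem_range] at hj
      rcases Nat.eq_zero_or_pos j with rfl | hj1
      · rw [Q.bracket_e0_top p hp1 hpm, smul_zero]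
      · rw [Q.bracket_zero p j (n - 1) hp1 hpm hj1 (by omega) (by omega) (by omega)
          (by omega), smul_zero])]
  have hpair := Q.bracket_pair p 1 hp1 hpm le_rfl (by omega)
  rw [hpair, smul_smul, pow_one, neg_smul, mul_neg_one, neg_smul]

include hn5 in
lemma Ln (F : ℕ → ℕ → ℂ) (p : ℕ) (hp1 : 1 ≤ p) (hpm : p ≤ m) :
    ⁅csum Q F, Q.e p n⁆ = 0 := by
  rw [L0 Q F p n hp1 hpm le_rfl]
  refine Finset.sum_eq_zero fun j hj => ?_
  rw [mem_range] at hj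
  rcases Nat.eq_zero_or_pos j with rfl | hj1
  · rw [Q.bracket_e0_n p hp1 hpm, smul_zero]
  · rw [Q.bracket_zero p j n hp1 hpm hj1 (by omega) (by omega) le_rfl (by omega), smul_zero]

lemma L0zero (F : ℕ → ℕ → ℂ) (p u : ℕ) (hp1 : 1 ≤ p) (hpm : p ≤ m) (hu : u ≤ n)
    (h : ∀ j, j < n → F p j = 0) : ⁅csum Q F, Q.e p u⁆ = 0 := by
  rw [L0 Q F p u hp1 hpm hu]
  refine Finset.sum_eq_zero fun j hj => ?_
  rw [mem_range] at hj
  rw [h j hj, zero_smul]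

end Infra3
section Infra4

variable {n m r : ℕ} {N : Type*} [LieRing N] [LieAlgebra ℂ N]

/-- coefficients of `δ e_{st}` for `2 ≤ t ≤ n-1` -/
def Kc (c : ℕ → ℕ → ℕ → ℕ → ℂ) (s t : ℕ) : ℕ → ℕ → ℂ := fun i j =>
  if i = s ∧ j = t then ((t : ℂ) - 1) * c s 0 s 0 + c s 1 s 1
  else if i = s ∧ t < j then c s 1 s (j - t + 1) else 0

/-- the eigenvalue `λ_s` -/
def lam (c : ℕ → ℕ → ℕ → ℕ → ℂ) (n s : ℕ) : ℂ :=
  ((n : ℂ) - 2) * c s 0 s 0 + 2 * c s 1 s 1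

lemma pow_neg_one_sub (hodd : Odd n) (t : ℕ) (ht : t ≤ n) :
    (-1 : ℂ) ^ (n - t) = (-1) ^ (t + 1) := by
  rcases Nat.even_or_odd t with h | h
  · rw [(Nat.Odd.sub_even ht hodd h).neg_one_pow, (Even.add_one h).neg_one_pow]
  · rw [(Nat.Odd.sub_odd hodd h).neg_one_pow, (Odd.add_one h).neg_one_pow]

variable (Q : QuasiQnFiliform n m r N)

lemma shift_sum (g : ℕ → ℂ) (p a b : ℕ) :
    ∑ j ∈ Icc a b, g j • Q.e p (j + 1)
      = ∑ j ∈ Icc (a + 1) (b + 1), g (j - 1) • Q.e p j := by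
  rw [← Finset.map_add_right_Icc a b 1, Finset.sum_map]
  refine Finset.sum_congr rfl fun j _ => ?_
  simp [addRightEmbedding]

lemma peel_Icc (f : ℕ → N) (a b : ℕ) (hab : a ≤ b) :
    ∑ j ∈ Icc a b, f j = f a + ∑ j ∈ Icc (a + 1) b, f j := by
  have hins : Icc a b = insert a (Icc (a + 1) b) := by
    ext x
    simp only [mem_Icc, Finset.mem_insert]
    omega
  rw [hins, Finset.sum_insert (by simp [mem_Icc])]

variable (hn5 : 5 ≤ n) (hodd : Odd n) (hrm : r ≤ m)
variable (c : ℕ → ℕ → ℕ → ℕ → ℂ)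

include hn5 in
lemma Kc_csum (s t : ℕ) (hs1 : 1 ≤ s) (hsm : s ≤ m) (ht2 : 2 ≤ t) (htn : t ≤ n - 1) :
    csum Q (Kc c s t) = (((t : ℂ) - 1) * c s 0 s 0 + c s 1 s 1) • Q.e s t
      + ∑ j ∈ Icc (t + 1) (n - 1), c s 1 s (j - t + 1) • Q.e s j := by
  rw [single_csum Q _ s t hs1 hsm (by omega), seg_csum Q _ s (t + 1) (n - 1) hs1 hsm (by omega),
    csum_add]
  refine csum_congr Q fun i j hi1 him hj => ?_
  unfold Kc
  rcases eq_or_ne i s with rfl | hne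
  · rcases eq_or_ne j t with rfl | hjne
    · simp [Nat.lt_irrefl]
    · rcases Nat.lt_or_ge t j with hlt | hge
      · rw [if_neg (by tauto), if_pos ⟨rfl, hlt⟩, if_neg (by tauto),
          if_pos ⟨rfl, by omega, by omega⟩, zero_add]
      · rw [if_neg (by tauto), if_neg (by omega), if_neg (by tauto), if_neg (by omega), add_zero]
  · simp [hne]

section
variable (δ : N →ₗ[ℂ] N)
variable (hc : ∀ s t, 1 ≤ s → s ≤ m → t ≤ 1 →
      δ (Q.e s t) = ∑ i ∈ Icc 1 m, ∑ j ∈ range n, c s t i j • Q.e i j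
        + ∑ i ∈ Icc 1 r, c s t i n • Q.e i n)
variable (hrec : ∀ s t, 1 ≤ s → s ≤ m → 2 ≤ t → t ≤ n - 1 →
      δ (Q.e s t) = ⁅δ (Q.e s 0), Q.e s (t - 1)⁆ + ⁅Q.e s 0, δ (Q.e s (t - 1))⁆)

include hc in
lemma hc0 (s : ℕ) (hs1 : 1 ≤ s) (hsm : s ≤ m) :
    δ (Q.e s 0) = csum Q (c s 0) + esum Q (fun i => c s 0 i n) :=
  hc s 0 hs1 hsm (by omega)

include hc in
lemma hc1 (s : ℕ) (hs1 : 1 ≤ s) (hsm : s ≤ m) :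
    δ (Q.e s 1) = csum Q (c s 1) + esum Q (fun i => c s 1 i n) :=
  hc s 1 hs1 hsm le_rfl

include hn5 hodd hrm hc hrec in
lemma KF (s : ℕ) (hs1 : 1 ≤ s) (hsm : s ≤ m) :
    ∀ t, 2 ≤ t → t ≤ n - 1 →
    δ (Q.e s t) = csum Q (Kc c s t) + ((-1 : ℂ) ^ t * c s 0 s (n + 1 - t)) • Q.e s n := by
  intro t ht2
  induction t, ht2 using Nat.le_induction with
  | base =>
    intro htn
    have h2 := hrec s 2 hs1 hsm le_rfl (by omega)
    norm_num at h2
    rw [h2, hc0 Q c δ hc s hs1 hsm, hc1 Q c δ hc s hs1 hsm]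
    rw [add_lie, Lmid Q hn5 (c s 0) s 1 hs1 hsm le_rfl (by omega),
      esum_bracket Q hn5 hrm _ s 1 hs1 hsm (by omega), add_zero]
    rw [← lie_skew, add_lie, Lzero Q hn5 (c s 1) s hs1 hsm,
      esum_bracket Q hn5 hrm _ s 0 hs1 hsm (by omega), add_zero, neg_neg]
    rw [Kc_csum Q hn5 c s 2 hs1 hsm le_rfl htn]
    rw [shift_sum Q (fun j => c s 1 s j) s 1 (n - 2)]
    rw [show n - 2 + 1 = n - 1 by omega]
    rw [peel_Icc _ 2 (n - 1) (by omega)]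
    have e1 : (-1 : ℂ) ^ (n - 1) = 1 := (Nat.Odd.sub_odd hodd odd_one).neg_one_pow
    have e2 : ∀ j ∈ Icc 3 (n - 1), (c s 1 s (j - 1)) • Q.e s j
        = (c s 1 s (j - 2 + 1)) • Q.e s j := by
      intro j hj; rw [mem_Icc] at hj
      rw [show j - 2 + 1 = j - 1 by omega]
    rw [Finset.sum_congr rfl e2]
    rw [e1, show n + 1 - 2 = n - 1 by omega]
    norm_num
    module
  | succ t ht ih =>
    intro htn
    have ihe := ih (by omega)
    have h2 := hrec s (t + 1) hs1 hsm (by omega) htn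
    norm_num at h2
    rw [h2, hc0 Q c δ hc s hs1 hsm, ihe]
    rw [add_lie, Lmid Q hn5 (c s 0) s t hs1 hsm (by omega) (by omega),
      esum_bracket Q hn5 hrm _ s t hs1 hsm (by omega), add_zero]
    rw [← lie_skew, add_lie, Lzero Q hn5 (Kc c s t) s hs1 hsm, smul_lie,
      en_bracket Q hn5 s s 0 hs1 hsm hs1 hsm (by omega), smul_zero, add_zero, neg_neg]
    -- now massage the middle sum
    have hmid : ∑ j ∈ Icc 1 (n - 2), Kc c s t s j • Q.e s (j + 1)
        = (((t : ℂ) - 1) * c s 0 s 0 + c s 1 s 1) • Q.e s (t + 1)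
          + ∑ j ∈ Icc (t + 1) (n - 2), c s 1 s (j - t + 1) • Q.e s (j + 1) := by
      have hsub : Icc t (n - 2) ⊆ Icc 1 (n - 2) := by
        intro x hx; rw [mem_Icc] at hx ⊢; omega
      rw [← Finset.sum_subset hsub (fun j hj hnj => by
        rw [mem_Icc] at hj; rw [mem_Icc] at hnj
        have : Kc c s t s j = 0 := by
          unfold Kc; rw [if_neg (by omega), if_neg (by omega)]
        rw [this, zero_smul])]
      rw [peel_Icc _ t (n - 2) (by omega)]
      congr 1
      · unfold Kc; rw [if_pos ⟨rfl, rfl⟩]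
      · refine Finset.sum_congr rfl fun j hj => ?_
        rw [mem_Icc] at hj
        unfold Kc; rw [if_neg (by omega), if_pos ⟨rfl, by omega⟩]
    rw [hmid]
    rw [shift_sum Q (fun j => c s 1 s (j - t + 1)) s (t + 1) (n - 2),
      show n - 2 + 1 = n - 1 by omega]
    rw [Kc_csum Q hn5 c s (t + 1) hs1 hsm (by omega) (by omega)]
    have e2 : ∀ j ∈ Icc (t + 1 + 1) (n - 1), (c s 1 s (j - 1 - t + 1)) • Q.e s j
        = (c s 1 s (j - (t + 1) + 1)) • Q.e s j := by
      intro j hj; rw [mem_Icc] at hj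
      rw [show j - 1 - t + 1 = j - (t + 1) + 1 by omega]
    rw [Finset.sum_congr rfl e2]
    have e3 : (-1 : ℂ) ^ (n - t) * c s 0 s (n - t)
        = (-1 : ℂ) ^ (t + 1) * c s 0 s (n + 1 - (t + 1)) := by
      rw [pow_neg_one_sub hodd t (by omega), show n + 1 - (t + 1) = n - t by omega]
    rw [e3]
    push_cast
    module

variable (hrecn : ∀ s, 1 ≤ s → s ≤ r →
      δ (Q.e s n) = -⁅δ (Q.e s 1), Q.e s (n - 1)⁆ - ⁅Q.e s 1, δ (Q.e s (n - 1))⁆)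

include hn5 hodd hrm hc hrec hrecn in
lemma DEN (s : ℕ) (hs1 : 1 ≤ s) (hsr : s ≤ r) :
    δ (Q.e s n) = lam c n s • Q.e s n := by
  have hsm : s ≤ m := le_trans hsr hrm
  have h := hrecn s hs1 hsr
  rw [hc1 Q c δ hc s hs1 hsm] at h
  rw [KF Q hn5 hodd hrm c δ hc hrec s hs1 hsm (n - 1) (by omega) le_rfl] at h
  rw [add_lie, Ltop Q hn5 (c s 1) s hs1 hsm,
    esum_bracket Q hn5 hrm _ s (n - 1) hs1 hsm (by omega), add_zero] at h
  rw [← lie_skew, add_lie, Lmid Q hn5 (Kc c s (n - 1)) s 1 hs1 hsm le_rfl (by omega),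
    smul_lie, en_bracket Q hn5 s s 1 hs1 hsm hs1 hsm (by omega), smul_zero, add_zero] at h
  have k0 : Kc c s (n - 1) s 0 = 0 := by
    unfold Kc; rw [if_neg (by omega), if_neg (by omega)]
  have k1 : Kc c s (n - 1) s (n - 1) = ((n : ℂ) - 1 - 1) * c s 0 s 0 + c s 1 s 1 := by
    unfold Kc
    rw [if_pos ⟨rfl, rfl⟩]
    rw [Nat.cast_sub (by omega : 1 ≤ n)]
    norm_num
  rw [k0, k1] at h
  have e1 : (-1 : ℂ) ^ (n - 1) = 1 := (Nat.Odd.sub_odd hodd odd_one).neg_one_pow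
  rw [e1] at h
  rw [h]
  unfold lam
  norm_num
  module

end

end Infra4
section Forward

variable {n m r : ℕ} {N : Type*} [LieRing N] [LieAlgebra ℂ N]
variable (Q : QuasiQnFiliform n m r N)
variable (hn5 : 5 ≤ n) (hodd : Odd n) (hrm : r ≤ m)
variable (c : ℕ → ℕ → ℕ → ℕ → ℂ) (δ : N →ₗ[ℂ] N)
variable (hc : ∀ s t, 1 ≤ s → s ≤ m → t ≤ 1 →
      δ (Q.e s t) = ∑ i ∈ Icc 1 m, ∑ j ∈ range n, c s t i j • Q.e i j
        + ∑ i ∈ Icc 1 r, c s t i n • Q.e i n)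
variable (hrec : ∀ s t, 1 ≤ s → s ≤ m → 2 ≤ t → t ≤ n - 1 →
      δ (Q.e s t) = ⁅δ (Q.e s 0), Q.e s (t - 1)⁆ + ⁅Q.e s 0, δ (Q.e s (t - 1))⁆)
variable (b : ℕ → ℕ → ℂ)
  (hb : ∀ i, 1 ≤ i → i ≤ m → Q.e i n = ∑ j ∈ Icc 1 r, b j i • Q.e j n)
variable (hder : ∀ x y : N, δ ⁅x, y⁆ = ⁅δ x, y⁆ + ⁅x, δ y⁆)

include hn5 hrm hc hder in
lemma FW1a (s p j : ℕ) (hs1 : 1 ≤ s) (hsm : s ≤ m) (hp1 : 1 ≤ p) (hpm : p ≤ m)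
    (hsp : s ≠ p) (hj1 : 1 ≤ j) (hj2 : j ≤ n - 2) : c s 0 p j = 0 := by
  have h := hder (Q.e s 0) (Q.e p 0)
  rw [Q.bracket_comm s p 0 0 hs1 hsm hp1 hpm hsp (by omega) (by omega), map_zero] at h
  rw [hc0 Q c δ hc s hs1 hsm, hc0 Q c δ hc p hp1 hpm] at h
  rw [add_lie, Lzero Q hn5 (c s 0) p hp1 hpm,
    esum_bracket Q hn5 hrm _ p 0 hp1 hpm (by omega), add_zero] at h
  rw [← lie_skew, add_lie, Lzero Q hn5 (c p 0) s hs1 hsm,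
    esum_bracket Q hn5 hrm _ s 0 hs1 hsm (by omega), add_zero, neg_neg] at h
  rw [shift_sum Q (fun x => c s 0 p x) p 1 (n - 2),
    shift_sum Q (fun x => c p 0 s x) s 1 (n - 2),
    show n - 2 + 1 = n - 1 by omega] at h
  rw [seg_csum Q _ p 2 (n - 1) hp1 hpm (by omega),
    seg_csum Q _ s 2 (n - 1) hs1 hsm (by omega), csum_neg, csum_add] at h
  have h0 : csum Q (fun i j => -(if i = p ∧ 2 ≤ j ∧ j ≤ n - 1 then c s 0 p (j - 1) else 0)
        + (if i = s ∧ 2 ≤ j ∧ j ≤ n - 1 then c p 0 s (j - 1) else 0))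
      + esum Q (fun _ => 0) = 0 := by
    rw [← zero_esum, add_zero, ← h]
  obtain ⟨h1, -⟩ := extract Q _ _ h0
  have h2 := h1 p (j + 1) hp1 hpm (by omega)
  simp only [if_pos (⟨rfl, by omega, by omega⟩ : p = p ∧ 2 ≤ j + 1 ∧ j + 1 ≤ n - 1),
    if_neg (fun hcon : p = s ∧ 2 ≤ j + 1 ∧ j + 1 ≤ n - 1 => hsp (hcon.1.symm)),
    show j + 1 - 1 = j by omega, add_zero, neg_eq_zero] at h2
  simpa [show 2 ≤ j + 1 by omega, show j + 1 ≤ n - 1 by omega] using h2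

end Forward

section Forward2

variable {n m r : ℕ} {N : Type*} [LieRing N] [LieAlgebra ℂ N]
variable (Q : QuasiQnFiliform n m r N)
variable (hn5 : 5 ≤ n) (hodd : Odd n) (hrm : r ≤ m)
variable (c : ℕ → ℕ → ℕ → ℕ → ℂ) (δ : N →ₗ[ℂ] N)
variable (hc : ∀ s t, 1 ≤ s → s ≤ m → t ≤ 1 →
      δ (Q.e s t) = ∑ i ∈ Icc 1 m, ∑ j ∈ range n, c s t i j • Q.e i j
        + ∑ i ∈ Icc 1 r, c s t i n • Q.e i n)
variable (hrec : ∀ s t, 1 ≤ s → s ≤ m → 2 ≤ t → t ≤ n - 1 →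
      δ (Q.e s t) = ⁅δ (Q.e s 0), Q.e s (t - 1)⁆ + ⁅Q.e s 0, δ (Q.e s (t - 1))⁆)
variable (hrecn : ∀ s, 1 ≤ s → s ≤ r →
      δ (Q.e s n) = -⁅δ (Q.e s 1), Q.e s (n - 1)⁆ - ⁅Q.e s 1, δ (Q.e s (n - 1))⁆)
variable (b : ℕ → ℕ → ℂ)
  (hb : ∀ i, 1 ≤ i → i ≤ m → Q.e i n = ∑ j ∈ Icc 1 r, b j i • Q.e j n)
variable (hder : ∀ x y : N, δ ⁅x, y⁆ = ⁅δ x, y⁆ + ⁅x, δ y⁆)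

include hn5 hodd hrm hc hb hder in
lemma FW1b (s p : ℕ) (hs1 : 1 ≤ s) (hsm : s ≤ m) (hp1 : 1 ≤ p) (hpm : p ≤ m)
    (hsp : s ≠ p) :
    c s 0 p 0 = 0 ∧ c s 0 p (n - 1) = 0 ∧ ∀ j, 1 ≤ j → j ≤ n - 2 → c p 1 s j = 0 := by
  have e1 : (-1 : ℂ) ^ (n - 1) = 1 := (Nat.Odd.sub_odd hodd odd_one).neg_one_pow
  have h := hder (Q.e s 0) (Q.e p 1)
  rw [Q.bracket_comm s p 0 1 hs1 hsm hp1 hpm hsp (by omega) (by omega), map_zero] at h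
  rw [hc0 Q c δ hc s hs1 hsm, hc1 Q c δ hc p hp1 hpm] at h
  rw [add_lie, Lmid Q hn5 (c s 0) p 1 hp1 hpm le_rfl (by omega),
    esum_bracket Q hn5 hrm _ p 1 hp1 hpm (by omega), add_zero] at h
  rw [← lie_skew, add_lie, Lzero Q hn5 (c p 1) s hs1 hsm,
    esum_bracket Q hn5 hrm _ s 0 hs1 hsm (by omega), add_zero, neg_neg] at h
  rw [e1, one_mul] at h
  rw [en_esum Q b hb (c s 0 p (n - 1)) p hp1 hpm] at h
  rw [single_csum Q (c s 0 p 0) p (1 + 1) hp1 hpm (by omega)] at h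
  rw [shift_sum Q (fun x => c p 1 s x) s 1 (n - 2), show n - 2 + 1 = n - 1 by omega] at h
  rw [seg_csum Q _ s 2 (n - 1) hs1 hsm (by omega)] at h
  rw [add_right_comm, csum_add] at h
  have h0 : csum Q (fun i j => (if i = p ∧ j = 1 + 1 then c s 0 p 0 else 0)
        + (if i = s ∧ 2 ≤ j ∧ j ≤ n - 1 then c p 1 s (j - 1) else 0))
      + esum Q (fun j => c s 0 p (n - 1) * b j p) = 0 := h.symm
  obtain ⟨h1, h2⟩ := extract Q _ _ h0
  refine ⟨?_, ?_, ?_⟩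
  · have h3 := h1 p 2 hp1 hpm (by omega)
    simpa [Ne.symm hsp, show ¬(2 : ℕ) ≤ n - 1 → False by omega] using h3
  · refine coeff_en_zero Q b hb _ p hp1 hpm fun j hj1 hj2 => h2 j hj1 hj2
  · intro j hj1 hj2
    have h3 := h1 s (j + 1) hs1 hsm (by omega)
    simpa [hsp, show 2 ≤ j + 1 by omega, show j + 1 ≤ n - 1 by omega,
      show j + 1 - 1 = j by omega] using h3

include hn5 hodd hrm hc hrec hb hder in
lemma FW2 (s : ℕ) (hs1 : 1 ≤ s) (hsm : s ≤ m) : c s 0 s 1 = 0 := by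
  have h := hder (Q.e s 0) (Q.e s (n - 1))
  rw [Q.bracket_e0_top s hs1 hsm, map_zero] at h
  rw [hc0 Q c δ hc s hs1 hsm,
    KF Q hn5 hodd hrm c δ hc hrec s hs1 hsm (n - 1) (by omega) le_rfl] at h
  rw [add_lie, Ltop Q hn5 (c s 0) s hs1 hsm,
    esum_bracket Q hn5 hrm _ s (n - 1) hs1 hsm (by omega), add_zero] at h
  rw [← lie_skew, add_lie, Lzero Q hn5 (Kc c s (n - 1)) s hs1 hsm, smul_lie,
    en_bracket Q hn5 s s 0 hs1 hsm hs1 hsm (by omega), smul_zero, add_zero] at h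
  have hz : ∑ j ∈ Icc 1 (n - 2), Kc c s (n - 1) s j • Q.e s (j + 1) = 0 :=
    Finset.sum_eq_zero fun j hj => by
      rw [mem_Icc] at hj
      unfold Kc
      rw [if_neg (by omega), if_neg (by omega), zero_smul]
  rw [hz, neg_zero, neg_zero, add_zero] at h
  rw [en_esum Q b hb (-(c s 0 s 1)) s hs1 hsm] at h
  have h0 : csum Q (fun _ _ => (0 : ℂ)) + esum Q (fun j => -(c s 0 s 1) * b j s) = 0 := by
    rw [← zero_csum, zero_add, ← h]
  obtain ⟨-, h2⟩ := extract Q _ _ h0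
  have := coeff_en_zero Q b hb (-(c s 0 s 1)) s hs1 hsm h2
  exact neg_eq_zero.mp this

include hn5 hodd hrm hc hrec hb hder in
lemma FW45 (s u : ℕ) (hs1 : 1 ≤ s) (hsm : s ≤ m) (hu2 : 2 ≤ u) (hun : u ≤ n - 2) :
    c s 1 s 0 = 0 ∧ ((-1 : ℂ) ^ (n - u) - 1) * c s 1 s (n - u) = 0 := by
  have e1 : (-1 : ℂ) ^ (n - 1) = 1 := (Nat.Odd.sub_odd hodd odd_one).neg_one_pow
  have h := hder (Q.e s 1) (Q.e s u)
  rw [Q.bracket_zero s 1 u hs1 hsm le_rfl (by omega) (by omega) (by omega) (by omega),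
    map_zero] at h
  rw [hc1 Q c δ hc s hs1 hsm,
    KF Q hn5 hodd hrm c δ hc hrec s hs1 hsm u hu2 (by omega)] at h
  rw [add_lie, Lmid Q hn5 (c s 1) s u hs1 hsm (by omega) hun,
    esum_bracket Q hn5 hrm _ s u hs1 hsm (by omega), add_zero] at h
  rw [← lie_skew, add_lie, Lmid Q hn5 (Kc c s u) s 1 hs1 hsm le_rfl (by omega), smul_lie,
    en_bracket Q hn5 s s 1 hs1 hsm hs1 hsm (by omega), smul_zero, add_zero] at h
  have k0 : Kc c s u s 0 = 0 := by
    unfold Kc; rw [if_neg (by omega), if_neg (by omega)]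
  have k1 : Kc c s u s (n - 1) = c s 1 s (n - u) := by
    unfold Kc
    rw [if_neg (by omega), if_pos ⟨rfl, by omega⟩, show n - 1 - u + 1 = n - u by omega]
  rw [k0, k1, e1, one_mul, zero_smul, zero_add] at h
  rw [en_esum Q b hb ((-1 : ℂ) ^ (n - u) * c s 1 s (n - u)) s hs1 hsm,
    en_esum Q b hb (c s 1 s (n - u)) s hs1 hsm] at h
  rw [single_csum Q (c s 1 s 0) s (u + 1) hs1 hsm (by omega)] at h
  rw [add_right_comm, esum_neg] at h
  rw [add_assoc, esum_add] at h
  have h0 : csum Q (fun i j => if i = s ∧ j = u + 1 then c s 1 s 0 else 0)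
      + esum Q (fun j => -(c s 1 s (n - u) * b j s)
        + (-1 : ℂ) ^ (n - u) * c s 1 s (n - u) * b j s) = 0 := h.symm
  obtain ⟨h1, h2⟩ := extract Q _ _ h0
  constructor
  · have h3 := h1 s (u + 1) hs1 hsm (by omega)
    simpa using h3
  · refine coeff_en_zero Q b hb _ s hs1 hsm fun j hj1 hj2 => ?_
    have h3 := h2 j hj1 hj2
    linear_combination h3

include hn5 hodd hrm hc hb hder in
lemma FW6 (s p : ℕ) (hs1 : 1 ≤ s) (hsm : s ≤ m) (hp1 : 1 ≤ p) (hpm : p ≤ m)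
    (hsp : s ≠ p) :
    c s 1 p 0 = 0 ∧
    ∀ j, 1 ≤ j → j ≤ r → c s 1 p (n - 1) * b j p - c p 1 s (n - 1) * b j s = 0 := by
  have e1 : (-1 : ℂ) ^ (n - 1) = 1 := (Nat.Odd.sub_odd hodd odd_one).neg_one_pow
  have h := hder (Q.e s 1) (Q.e p 1)
  rw [Q.bracket_comm s p 1 1 hs1 hsm hp1 hpm hsp (by omega) (by omega), map_zero] at h
  rw [hc1 Q c δ hc s hs1 hsm, hc1 Q c δ hc p hp1 hpm] at h
  rw [add_lie, Lmid Q hn5 (c s 1) p 1 hp1 hpm le_rfl (by omega),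
    esum_bracket Q hn5 hrm _ p 1 hp1 hpm (by omega), add_zero] at h
  rw [← lie_skew, add_lie, Lmid Q hn5 (c p 1) s 1 hs1 hsm le_rfl (by omega),
    esum_bracket Q hn5 hrm _ s 1 hs1 hsm (by omega), add_zero] at h
  rw [e1, one_mul, one_mul] at h
  rw [en_esum Q b hb (c s 1 p (n - 1)) p hp1 hpm,
    en_esum Q b hb (c p 1 s (n - 1)) s hs1 hsm] at h
  rw [single_csum Q (c s 1 p 0) p (1 + 1) hp1 hpm (by omega),
    single_csum Q (c p 1 s 0) s (1 + 1) hs1 hsm (by omega)] at h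
  rw [neg_add, csum_neg, esum_neg, add_add_add_comm, csum_add, esum_add] at h
  have h0 : csum Q (fun i j => (if i = p ∧ j = 1 + 1 then c s 1 p 0 else 0)
        + -(if i = s ∧ j = 1 + 1 then c p 1 s 0 else 0))
      + esum Q (fun j => c s 1 p (n - 1) * b j p + -(c p 1 s (n - 1) * b j s)) = 0 := h.symm
  obtain ⟨h1, h2⟩ := extract Q _ _ h0
  constructor
  · have h3 := h1 p 2 hp1 hpm (by omega)
    simpa [Ne.symm hsp] using h3
  · intro j hj1 hj2
    have h3 := h2 j hj1 hj2
    linear_combination h3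

include hn5 hodd hrm hc hrec hrecn hb hder in
lemma FW7 (s : ℕ) (hs1 : 1 ≤ s) (hsm : s ≤ m) :
    ∀ j, 1 ≤ j → j ≤ r → b j s * (lam c n s - lam c n j) = 0 := by
  have h := hder (Q.e s 1) (Q.e s (n - 1))
  rw [Q.bracket_pair s 1 hs1 hsm le_rfl (by omega), pow_one] at h
  rw [hc1 Q c δ hc s hs1 hsm,
    KF Q hn5 hodd hrm c δ hc hrec s hs1 hsm (n - 1) (by omega) le_rfl] at h
  rw [add_lie, Ltop Q hn5 (c s 1) s hs1 hsm,
    esum_bracket Q hn5 hrm _ s (n - 1) hs1 hsm (by omega), add_zero] at h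
  rw [← lie_skew, add_lie, Lmid Q hn5 (Kc c s (n - 1)) s 1 hs1 hsm le_rfl (by omega),
    smul_lie, en_bracket Q hn5 s s 1 hs1 hsm hs1 hsm (by omega), smul_zero, add_zero] at h
  have k0 : Kc c s (n - 1) s 0 = 0 := by
    unfold Kc; rw [if_neg (by omega), if_neg (by omega)]
  have k1 : Kc c s (n - 1) s (n - 1) = ((n : ℂ) - 1 - 1) * c s 0 s 0 + c s 1 s 1 := by
    unfold Kc
    rw [if_pos ⟨rfl, rfl⟩, Nat.cast_sub (by omega : 1 ≤ n)]
    norm_num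
  have e1 : (-1 : ℂ) ^ (n - 1) = 1 := (Nat.Odd.sub_odd hodd odd_one).neg_one_pow
  rw [k0, k1, e1, one_mul, zero_smul, zero_add] at h
  rw [en_esum Q b hb (-(c s 1 s 1)) s hs1 hsm,
    en_esum Q b hb (((n : ℂ) - 1 - 1) * c s 0 s 0 + c s 1 s 1) s hs1 hsm] at h
  -- LHS : δ ((-1) • e s n)
  rw [neg_smul, one_smul, map_neg] at h
  rw [hb s hs1 hsm, map_sum] at h
  have hL : ∑ j ∈ Icc 1 r, δ (b j s • Q.e j n) = esum Q (fun j => b j s * lam c n j) := by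
    unfold esum
    refine Finset.sum_congr rfl fun j hj => ?_
    rw [mem_Icc] at hj
    rw [map_smul, DEN Q hn5 hodd hrm c δ hc hrec hrecn j hj.1 hj.2, smul_smul]
  rw [hL] at h
  rw [esum_neg, esum_neg, esum_add] at h
  have h0 : csum Q (fun _ _ => (0 : ℂ)) + esum Q (fun j => -(b j s * lam c n j)) =
      csum Q (fun _ _ => (0 : ℂ))
        + esum Q (fun j => -(c s 1 s 1) * b j s
          + -((((n : ℂ) - 1 - 1) * c s 0 s 0 + c s 1 s 1) * b j s)) := by
    rw [← zero_csum, zero_add, zero_add]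
    exact h
  obtain ⟨-, h2⟩ := extract_eq Q _ _ _ _ h0
  intro j hj1 hj2
  have h3 := h2 j hj1 hj2
  unfold lam at h3 ⊢
  linear_combination h3

end Forward2
section Backward1

variable {n m r : ℕ} {N : Type*} [LieRing N] [LieAlgebra ℂ N]
variable (Q : QuasiQnFiliform n m r N)

lemma col_csum (g : ℕ → ℂ) (u : ℕ) (hu : u < n) :
    ∑ i ∈ Icc 1 m, g i • Q.e i u = csum Q (fun i j => if j = u then g i else 0) := by
  unfold csum
  refine Finset.sum_congr rfl fun i _ => ?_
  rw [Finset.sum_eq_single_of_mem u (mem_range.2 hu) (fun j _ hj => by simp [hj])]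
  simp

variable (hn5 : 5 ≤ n) (hodd : Odd n) (hrm : r ≤ m)
variable (c : ℕ → ℕ → ℕ → ℕ → ℂ) (δ : N →ₗ[ℂ] N)
variable (hc : ∀ s t, 1 ≤ s → s ≤ m → t ≤ 1 →
      δ (Q.e s t) = ∑ i ∈ Icc 1 m, ∑ j ∈ range n, c s t i j • Q.e i j
        + ∑ i ∈ Icc 1 r, c s t i n • Q.e i n)
variable (hrec : ∀ s t, 1 ≤ s → s ≤ m → 2 ≤ t → t ≤ n - 1 →
      δ (Q.e s t) = ⁅δ (Q.e s 0), Q.e s (t - 1)⁆ + ⁅Q.e s 0, δ (Q.e s (t - 1))⁆)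
variable (hrecn : ∀ s, 1 ≤ s → s ≤ r →
      δ (Q.e s n) = -⁅δ (Q.e s 1), Q.e s (n - 1)⁆ - ⁅Q.e s 1, δ (Q.e s (n - 1))⁆)
variable (b : ℕ → ℕ → ℂ)
  (hb : ∀ i, 1 ≤ i → i ≤ m → Q.e i n = ∑ j ∈ Icc 1 r, b j i • Q.e j n)

include hn5 hc in
lemma BW0 (h22 : ∀ s, 1 ≤ s → s ≤ m →
      δ (Q.e s 0) = c s 0 s 0 • Q.e s 0 + ∑ i ∈ Icc 2 (n - 1), c s 0 s i • Q.e s i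
        + ∑ i ∈ Icc 1 r, c s 0 i n • Q.e i n) :
    ∀ s p j, 1 ≤ s → s ≤ m → 1 ≤ p → p ≤ m → j < n → (p ≠ s ∨ j = 1) →
      c s 0 p j = 0 := by
  intro s p j hs1 hsm hp1 hpm hj hcase
  have h := (hc0 Q c δ hc s hs1 hsm).symm.trans (h22 s hs1 hsm)
  rw [single_csum Q (c s 0 s 0) s 0 hs1 hsm (by omega),
    seg_csum Q _ s 2 (n - 1) hs1 hsm (by omega), csum_add] at h
  have h' : csum Q (c s 0) + esum Q (fun i => c s 0 i n)
      = csum Q (fun i j => (if i = s ∧ j = 0 then c s 0 s 0 else 0)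
          + (if i = s ∧ 2 ≤ j ∧ j ≤ n - 1 then c s 0 s j else 0))
        + esum Q (fun i => c s 0 i n) := h
  obtain ⟨h1, -⟩ := extract_eq Q _ _ _ _ h'
  have h2 := h1 p j hp1 hpm hj
  rcases hcase with hne | rfl
  · simpa [hne] using h2
  · simpa using h2

include hn5 hc in
lemma BW1 (h23 : ∀ s, 1 ≤ s → s ≤ m →
      δ (Q.e s 1) = ∑ i ∈ Icc 1 (n - 2), c s 1 s i • Q.e s i
        + ∑ i ∈ Icc 1 m, c s 1 i (n - 1) • Q.e i (n - 1)
        + ∑ i ∈ Icc 1 r, c s 1 i n • Q.e i n) :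
    ∀ s p j, 1 ≤ s → s ≤ m → 1 ≤ p → p ≤ m → j ≤ n - 2 → (p ≠ s ∨ j = 0) →
      c s 1 p j = 0 := by
  intro s p j hs1 hsm hp1 hpm hj hcase
  have h := (hc1 Q c δ hc s hs1 hsm).symm.trans (h23 s hs1 hsm)
  rw [seg_csum Q _ s 1 (n - 2) hs1 hsm (by omega),
    col_csum Q _ (n - 1) (by omega), csum_add] at h
  have h' : csum Q (c s 1) + esum Q (fun i => c s 1 i n)
      = csum Q (fun i j => (if i = s ∧ 1 ≤ j ∧ j ≤ n - 2 then c s 1 s j else 0)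
          + (if j = n - 1 then c s 1 i (n - 1) else 0))
        + esum Q (fun i => c s 1 i n) := h
  obtain ⟨h1, -⟩ := extract_eq Q _ _ _ _ h'
  have h2 := h1 p j hp1 hpm (by omega)
  rcases hcase with hne | rfl
  · simpa [hne, show j ≠ n - 1 by omega] using h2
  · simpa [show (0 : ℕ) ≠ n - 1 by omega] using h2

include hb in
lemma Bdelta (s : ℕ) (hs1 : 1 ≤ s) (hsr : s ≤ r) (hrm : r ≤ m) :
    ∀ j, 1 ≤ j → j ≤ r → b j s = if j = s then 1 else 0 := by
  have h : csum Q (fun _ _ => (0 : ℂ)) + esum Q (fun i => if i = s then (1 : ℂ) else 0)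
      = csum Q (fun _ _ => (0 : ℂ)) + esum Q (fun j => b j s) := by
    rw [← zero_csum, zero_add, zero_add, ← single_esum Q 1 s hs1 hsr, one_smul]
    exact hb s hs1 (le_trans hsr hrm)
  obtain ⟨-, h2⟩ := extract_eq Q _ _ _ _ h
  intro j hj1 hj2
  exact (h2 j hj1 hj2).symm

include hb hrm in
lemma W7all (h21 : ∀ s j, r < s → s ≤ m → 1 ≤ j → j ≤ r → b j s * (lam c n s - lam c n j) = 0) :
    ∀ s j, 1 ≤ s → s ≤ m → 1 ≤ j → j ≤ r → b j s * (lam c n s - lam c n j) = 0 := by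
  intro s j hs1 hsm hj1 hj2
  rcases Nat.lt_or_ge r s with hlt | hge
  · exact h21 s j hlt hsm hj1 hj2
  · have hd := Bdelta Q b hb s hs1 hge hrm j hj1 hj2
    rcases eq_or_ne j s with rfl | hne
    · simp [hd]
    · simp [hd, hne]

include hn5 hodd hrm hc hrec hrecn hb in
lemma DEN_all
    (h21 : ∀ s j, r < s → s ≤ m → 1 ≤ j → j ≤ r → b j s * (lam c n s - lam c n j) = 0)
    (s : ℕ) (hs1 : 1 ≤ s) (hsm : s ≤ m) :
    δ (Q.e s n) = lam c n s • Q.e s n := by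
  have h7 := W7all Q hrm c b hb h21
  conv_lhs => rw [hb s hs1 hsm]
  rw [map_sum]
  have : ∀ j ∈ Icc 1 r, δ (b j s • Q.e j n) = lam c n s • (b j s • Q.e j n) := by
    intro j hj
    rw [mem_Icc] at hj
    rw [map_smul, DEN Q hn5 hodd hrm c δ hc hrec hrecn j hj.1 hj.2, smul_smul, smul_smul]
    have h8 := h7 s j hs1 hsm hj.1 hj.2
    rw [show b j s * lam c n j = lam c n s * b j s by linear_combination -h8]
  rw [Finset.sum_congr rfl this, ← Finset.smul_sum, ← hb s hs1 hsm]

end Backward1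
section Backward2

variable {n m r : ℕ} {N : Type*} [LieRing N] [LieAlgebra ℂ N]
variable (Q : QuasiQnFiliform n m r N)
variable (hn5 : 5 ≤ n) (hodd : Odd n) (hrm : r ≤ m)
variable (c : ℕ → ℕ → ℕ → ℕ → ℂ) (δ : N →ₗ[ℂ] N)
variable (hc : ∀ s t, 1 ≤ s → s ≤ m → t ≤ 1 →
      δ (Q.e s t) = ∑ i ∈ Icc 1 m, ∑ j ∈ range n, c s t i j • Q.e i j
        + ∑ i ∈ Icc 1 r, c s t i n • Q.e i n)
variable (hrec : ∀ s t, 1 ≤ s → s ≤ m → 2 ≤ t → t ≤ n - 1 →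
      δ (Q.e s t) = ⁅δ (Q.e s 0), Q.e s (t - 1)⁆ + ⁅Q.e s 0, δ (Q.e s (t - 1))⁆)
variable (hrecn : ∀ s, 1 ≤ s → s ≤ r →
      δ (Q.e s n) = -⁅δ (Q.e s 1), Q.e s (n - 1)⁆ - ⁅Q.e s 1, δ (Q.e s (n - 1))⁆)
variable
  (hW1 : ∀ s p j, 1 ≤ s → s ≤ m → 1 ≤ p → p ≤ m → j < n → (p ≠ s ∨ j = 1) → c s 0 p j = 0)
  (hW3 : ∀ s p j, 1 ≤ s → s ≤ m → 1 ≤ p → p ≤ m → j ≤ n - 2 → (p ≠ s ∨ j = 0) → c s 1 p j = 0)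

include hn5 hc hW1 in
lemma W_to_22 (s : ℕ) (hs1 : 1 ≤ s) (hsm : s ≤ m) :
    δ (Q.e s 0) = c s 0 s 0 • Q.e s 0 + ∑ i ∈ Icc 2 (n - 1), c s 0 s i • Q.e s i
      + ∑ i ∈ Icc 1 r, c s 0 i n • Q.e i n := by
  have hcs : csum Q (c s 0)
      = c s 0 s 0 • Q.e s 0 + ∑ i ∈ Icc 2 (n - 1), c s 0 s i • Q.e s i := by
    rw [single_csum Q (c s 0 s 0) s 0 hs1 hsm (by omega),
      seg_csum Q _ s 2 (n - 1) hs1 hsm (by omega), csum_add]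
    refine csum_congr Q fun i j hi1 him hj => ?_
    rcases eq_or_ne i s with rfl | hne
    · rcases Nat.eq_zero_or_pos j with rfl | hj1
      · simp
      · rcases eq_or_ne j 1 with rfl | hj2
        · rw [hW1 i i 1 hi1 him hi1 him (by omega) (Or.inr rfl)]
          simp
        · simp [show ¬(j = 0) by omega, show 2 ≤ j by omega, show j ≤ n - 1 by omega]
    · rw [hW1 s i j hs1 hsm hi1 him hj (Or.inl hne)]
      simp [hne]
  rw [hc0 Q c δ hc s hs1 hsm, hcs]
  rfl

include hn5 hc hW3 in
lemma W_to_23 (s : ℕ) (hs1 : 1 ≤ s) (hsm : s ≤ m) :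
    δ (Q.e s 1) = ∑ i ∈ Icc 1 (n - 2), c s 1 s i • Q.e s i
      + ∑ i ∈ Icc 1 m, c s 1 i (n - 1) • Q.e i (n - 1)
      + ∑ i ∈ Icc 1 r, c s 1 i n • Q.e i n := by
  have hcs : csum Q (c s 1)
      = ∑ i ∈ Icc 1 (n - 2), c s 1 s i • Q.e s i
        + ∑ i ∈ Icc 1 m, c s 1 i (n - 1) • Q.e i (n - 1) := by
    rw [seg_csum Q _ s 1 (n - 2) hs1 hsm (by omega), col_csum Q _ (n - 1) (by omega),
      csum_add]
    refine csum_congr Q fun i j hi1 him hj => ?_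
    rcases eq_or_ne i s with rfl | hne
    · rcases Nat.eq_zero_or_pos j with rfl | hj1
      · rw [hW3 i i 0 hi1 him hi1 him (by omega) (Or.inr rfl)]
        simp [show (0 : ℕ) ≠ n - 1 by omega]
      · rcases eq_or_ne j (n - 1) with rfl | hj2
        · simp [show ¬(n - 1 ≤ n - 2) by omega]
        · simp [show 1 ≤ j by omega, show j ≤ n - 2 by omega, hj2]
    · rcases eq_or_ne j (n - 1) with rfl | hj2
      · simp [hne]
      · rw [hW3 s i j hs1 hsm hi1 him (by omega) (Or.inl hne)]
        simp [hne, hj2]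
  rw [hc1 Q c δ hc s hs1 hsm, hcs]
  rfl

include hn5 hodd hrm hc hrec hrecn hW1 hW3 in
lemma cross1 (s t p u : ℕ) (hs1 : 1 ≤ s) (hsm : s ≤ m) (hp1 : 1 ≤ p) (hpm : p ≤ m)
    (hsp : s ≠ p) (ht : t ≤ n - 1 ∨ (t = n ∧ s ≤ r)) (hu : u ≤ n)
    (hex : ¬(t = 1 ∧ u = 1)) : ⁅δ (Q.e s t), Q.e p u⁆ = 0 := by
  by_cases ht0 : t = 0
  · subst ht0
    rw [hc0 Q c δ hc s hs1 hsm, add_lie,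
      L0zero Q (c s 0) p u hp1 hpm hu
        (fun j hj => hW1 s p j hs1 hsm hp1 hpm hj (Or.inl (Ne.symm hsp))),
      esum_bracket Q hn5 hrm _ p u hp1 hpm hu, add_zero]
  by_cases ht1 : t = 1
  · subst ht1
    have hu1 : u ≠ 1 := fun hcon => hex ⟨rfl, hcon⟩
    rw [hc1 Q c δ hc s hs1 hsm, add_lie,
      esum_bracket Q hn5 hrm _ p u hp1 hpm hu, add_zero]
    rcases eq_or_ne u n with rfl | hun
    · exact Ln Q hn5 (c s 1) p hp1 hpm
    rcases eq_or_ne u (n - 1) with rfl | hun1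
    · rw [Ltop Q hn5 (c s 1) p hp1 hpm,
        hW3 s p 1 hs1 hsm hp1 hpm (by omega) (Or.inl (Ne.symm hsp)), neg_zero, zero_smul]
    rcases Nat.eq_zero_or_pos u with rfl | hu2
    · rw [Lzero Q hn5 (c s 1) p hp1 hpm, neg_eq_zero]
      refine Finset.sum_eq_zero fun j hj => ?_
      rw [mem_Icc] at hj
      rw [hW3 s p j hs1 hsm hp1 hpm (by omega) (Or.inl (Ne.symm hsp)), zero_smul]
    · rw [Lmid Q hn5 (c s 1) p u hp1 hpm hu2 (by omega),
        hW3 s p 0 hs1 hsm hp1 hpm (by omega) (Or.inl (Ne.symm hsp)),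
        hW3 s p (n - u) hs1 hsm hp1 hpm (by omega) (Or.inl (Ne.symm hsp))]
      simp
  rcases ht with htn | ⟨rfl, hsr⟩
  · have ht2 : 2 ≤ t := by omega
    rw [KF Q hn5 hodd hrm c δ hc hrec s hs1 hsm t ht2 htn, add_lie, smul_lie,
      en_bracket Q hn5 s p u hs1 hsm hp1 hpm hu, smul_zero, add_zero]
    refine L0zero Q (Kc c s t) p u hp1 hpm hu fun j hj => ?_
    unfold Kc
    rw [if_neg (fun hcon => hsp hcon.1.symm), if_neg (fun hcon => hsp hcon.1.symm)]
  · rw [DEN Q hn5 hodd hrm c δ hc hrec hrecn s hs1 hsr, smul_lie,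
      en_bracket Q hn5 s p u hs1 hsm hp1 hpm hu, smul_zero]

end Backward2
section Backward3

variable {n m r : ℕ} {N : Type*} [LieRing N] [LieAlgebra ℂ N]

lemma neg_one_pow_congr' (a b : ℕ) (h : a % 2 = b % 2) : (-1 : ℂ) ^ a = (-1) ^ b := by
  rcases Nat.even_or_odd a with ha | ha
  · have hb : Even b := Nat.even_iff.2 (by rw [← h]; exact Nat.even_iff.1 ha)
    rw [ha.neg_one_pow, hb.neg_one_pow]
  · have hb : Odd b := Nat.odd_iff.2 (by rw [← h]; exact Nat.odd_iff.1 ha)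
    rw [ha.neg_one_pow, hb.neg_one_pow]

variable (Q : QuasiQnFiliform n m r N)
variable (hn5 : 5 ≤ n) (hodd : Odd n) (hrm : r ≤ m)
variable (c : ℕ → ℕ → ℕ → ℕ → ℂ) (δ : N →ₗ[ℂ] N)
variable (hc : ∀ s t, 1 ≤ s → s ≤ m → t ≤ 1 →
      δ (Q.e s t) = ∑ i ∈ Icc 1 m, ∑ j ∈ range n, c s t i j • Q.e i j
        + ∑ i ∈ Icc 1 r, c s t i n • Q.e i n)
variable (hrec : ∀ s t, 1 ≤ s → s ≤ m → 2 ≤ t → t ≤ n - 1 →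
      δ (Q.e s t) = ⁅δ (Q.e s 0), Q.e s (t - 1)⁆ + ⁅Q.e s 0, δ (Q.e s (t - 1))⁆)
variable (hrecn : ∀ s, 1 ≤ s → s ≤ r →
      δ (Q.e s n) = -⁅δ (Q.e s 1), Q.e s (n - 1)⁆ - ⁅Q.e s 1, δ (Q.e s (n - 1))⁆)
variable (b : ℕ → ℕ → ℂ)
  (hb : ∀ i, 1 ≤ i → i ≤ m → Q.e i n = ∑ j ∈ Icc 1 r, b j i • Q.e j n)
variable
  (hW1 : ∀ s p j, 1 ≤ s → s ≤ m → 1 ≤ p → p ≤ m → j < n → (p ≠ s ∨ j = 1) → c s 0 p j = 0)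
  (hW3 : ∀ s p j, 1 ≤ s → s ≤ m → 1 ≤ p → p ≤ m → j ≤ n - 2 → (p ≠ s ∨ j = 0) → c s 1 p j = 0)
  (h24 : ∀ s i, 1 ≤ s → s ≤ m → 3 ≤ i → i ≤ n - 2 → Odd i → c s 1 s i = 0)
  (h21 : ∀ s j, r < s → s ≤ m → 1 ≤ j → j ≤ r → b j s * (lam c n s - lam c n j) = 0)

include hn5 hodd hrm hc hrec hrecn hb hW1 hW3 h24 h21 in
lemma same_comp (s t u : ℕ) (hs1 : 1 ≤ s) (hsm : s ≤ m)
    (hu : u ≤ n - 1 ∨ (u = n ∧ s ≤ r)) (htu : t < u) :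
    δ ⁅Q.e s t, Q.e s u⁆ = ⁅δ (Q.e s t), Q.e s u⁆ + ⁅Q.e s t, δ (Q.e s u)⁆ := by
  have e1 : (-1 : ℂ) ^ (n - 1) = 1 := (Nat.Odd.sub_odd hodd odd_one).neg_one_pow
  rcases hu with hun | ⟨hueq, hsr⟩
  · -- u ≤ n - 1
    by_cases ht0 : t = 0
    · subst ht0
      rcases eq_or_ne u (n - 1) with rfl | hune
      · -- case B
        rw [Q.bracket_e0_top s hs1 hsm, map_zero]
        have h1 : ⁅δ (Q.e s 0), Q.e s (n - 1)⁆ = 0 := by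
          rw [hc0 Q c δ hc s hs1 hsm, add_lie, Ltop Q hn5 (c s 0) s hs1 hsm,
            esum_bracket Q hn5 hrm _ s (n - 1) hs1 hsm (by omega), add_zero,
            hW1 s s 1 hs1 hsm hs1 hsm (by omega) (Or.inr rfl), neg_zero, zero_smul]
        have h2 : ⁅Q.e s 0, δ (Q.e s (n - 1))⁆ = 0 := by
          rw [← lie_skew, KF Q hn5 hodd hrm c δ hc hrec s hs1 hsm (n - 1) (by omega) le_rfl,
            add_lie, Lzero Q hn5 (Kc c s (n - 1)) s hs1 hsm, smul_lie,
            en_bracket Q hn5 s s 0 hs1 hsm hs1 hsm (by omega), smul_zero, add_zero]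
          rw [neg_eq_zero, neg_eq_zero]
          refine Finset.sum_eq_zero fun j hj => ?_
          rw [mem_Icc] at hj
          unfold Kc
          rw [if_neg (by omega), if_neg (by omega), zero_smul]
        rw [h1, h2, add_zero]
      · -- case A
        have hu2 : u ≤ n - 2 := by omega
        have h := hrec s (u + 1) hs1 hsm (by omega) (by omega)
        rw [Q.bracket_e0 s u hs1 hsm (by omega) hu2]
        simpa using h
    by_cases ht1 : t = 1
    · subst ht1
      rcases eq_or_ne u (n - 1) with rfl | hune
      · -- case E
        rw [Q.bracket_pair s 1 hs1 hsm le_rfl (by omega), pow_one]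
        have h1 : ⁅δ (Q.e s 1), Q.e s (n - 1)⁆ = (-(c s 1 s 1)) • Q.e s n := by
          rw [hc1 Q c δ hc s hs1 hsm, add_lie, Ltop Q hn5 (c s 1) s hs1 hsm,
            esum_bracket Q hn5 hrm _ s (n - 1) hs1 hsm (by omega), add_zero]
        have h2 : ⁅Q.e s 1, δ (Q.e s (n - 1))⁆
            = -((((n : ℂ) - 1 - 1) * c s 0 s 0 + c s 1 s 1) • Q.e s n) := by
          rw [← lie_skew, KF Q hn5 hodd hrm c δ hc hrec s hs1 hsm (n - 1) (by omega) le_rfl,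
            add_lie, Lmid Q hn5 (Kc c s (n - 1)) s 1 hs1 hsm le_rfl (by omega), smul_lie,
            en_bracket Q hn5 s s 1 hs1 hsm hs1 hsm (by omega), smul_zero, add_zero]
          have k0 : Kc c s (n - 1) s 0 = 0 := by
            unfold Kc; rw [if_neg (by omega), if_neg (by omega)]
          have k1 : Kc c s (n - 1) s (n - 1)
              = ((n : ℂ) - 1 - 1) * c s 0 s 0 + c s 1 s 1 := by
            unfold Kc
            rw [if_pos ⟨rfl, rfl⟩, Nat.cast_sub (by omega : 1 ≤ n)]
            norm_num
          rw [k0, k1, e1, one_mul, zero_smul, zero_add]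
        rw [h1, h2, map_smul,
          DEN_all Q hn5 hodd hrm c δ hc hrec hrecn b hb h21 s hs1 hsm, smul_smul]
        have hco : (-1 : ℂ) * lam c n s
            = -(c s 1 s 1) + -(((n : ℂ) - 1 - 1) * c s 0 s 0 + c s 1 s 1) := by
          unfold lam; ring
        rw [hco, add_smul, neg_smul]
        module
      · -- case D
        have hu2 : 2 ≤ u := by omega
        have hu3 : u ≤ n - 2 := by omega
        rw [Q.bracket_zero s 1 u hs1 hsm le_rfl (by omega) (by omega) (by omega) (by omega),
          map_zero]
        have h1 : ⁅δ (Q.e s 1), Q.e s u⁆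
            = ((-1 : ℂ) ^ (n - u) * c s 1 s (n - u)) • Q.e s n := by
          rw [hc1 Q c δ hc s hs1 hsm, add_lie, Lmid Q hn5 (c s 1) s u hs1 hsm (by omega) hu3,
            esum_bracket Q hn5 hrm _ s u hs1 hsm (by omega), add_zero,
            hW3 s s 0 hs1 hsm hs1 hsm (by omega) (Or.inr rfl), zero_smul, zero_add]
        have h2 : ⁅Q.e s 1, δ (Q.e s u)⁆ = -((c s 1 s (n - u)) • Q.e s n) := by
          rw [← lie_skew, KF Q hn5 hodd hrm c δ hc hrec s hs1 hsm u hu2 (by omega),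
            add_lie, Lmid Q hn5 (Kc c s u) s 1 hs1 hsm le_rfl (by omega), smul_lie,
            en_bracket Q hn5 s s 1 hs1 hsm hs1 hsm (by omega), smul_zero, add_zero]
          have k0 : Kc c s u s 0 = 0 := by
            unfold Kc; rw [if_neg (by omega), if_neg (by omega)]
          have k1 : Kc c s u s (n - 1) = c s 1 s (n - u) := by
            unfold Kc
            rw [if_neg (by omega), if_pos ⟨rfl, by omega⟩, show n - 1 - u + 1 = n - u by omega]
          rw [k0, k1, e1, one_mul, zero_smul, zero_add]
        rw [h1, h2]
        rcases Nat.even_or_odd u with hue | huo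
        · have hX : c s 1 s (n - u) = 0 := by
            refine h24 s (n - u) hs1 hsm ?_ (by omega) ?_
            · have := Nat.even_iff.1 hue
              have := Nat.odd_iff.1 hodd
              omega
            · rw [Nat.odd_iff]
              have := Nat.even_iff.1 hue
              have := Nat.odd_iff.1 hodd
              omega
          rw [hX]
          simp
        · have hsg : (-1 : ℂ) ^ (n - u) = 1 := (Nat.Odd.sub_odd hodd huo).neg_one_pow
          rw [hsg, one_mul]
          simp
    · -- t ≥ 2 : case G
      have ht2 : 2 ≤ t := by omega
      have htn2 : t ≤ n - 2 := by omega
      have h2 : ⁅Q.e s t, δ (Q.e s u)⁆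
          = -(((-1 : ℂ) ^ (n - t) * Kc c s u s (n - t)) • Q.e s n) := by
        rw [← lie_skew, KF Q hn5 hodd hrm c δ hc hrec s hs1 hsm u (by omega) hun,
          add_lie, Lmid Q hn5 (Kc c s u) s t hs1 hsm (by omega) htn2, smul_lie,
          en_bracket Q hn5 s s t hs1 hsm hs1 hsm (by omega), smul_zero, add_zero]
        have k0 : Kc c s u s 0 = 0 := by
          unfold Kc; rw [if_neg (by omega), if_neg (by omega)]
        rw [k0, zero_smul, zero_add]
      have h1 : ⁅δ (Q.e s t), Q.e s u⁆
          = ((-1 : ℂ) ^ (n - u) * Kc c s t s (n - u)) • Q.e s n := by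
        rcases eq_or_ne u (n - 1) with rfl | hu2
        · rw [KF Q hn5 hodd hrm c δ hc hrec s hs1 hsm t ht2 (by omega), add_lie,
            Ltop Q hn5 (Kc c s t) s hs1 hsm, smul_lie,
            en_bracket Q hn5 s s (n - 1) hs1 hsm hs1 hsm (by omega), smul_zero, add_zero]
          have k1 : Kc c s t s 1 = 0 := by
            unfold Kc; rw [if_neg (by omega), if_neg (by omega)]
          have k2 : Kc c s t s (n - (n - 1)) = 0 := by
            unfold Kc
            rw [show n - (n - 1) = 1 by omega]
            rw [if_neg (by omega), if_neg (by omega)]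
          rw [k1, k2, neg_zero, zero_smul, mul_zero, zero_smul]
        · rw [KF Q hn5 hodd hrm c δ hc hrec s hs1 hsm t ht2 (by omega), add_lie,
            Lmid Q hn5 (Kc c s t) s u hs1 hsm (by omega) (by omega), smul_lie,
            en_bracket Q hn5 s s u hs1 hsm hs1 hsm (by omega), smul_zero, add_zero]
          have k0 : Kc c s t s 0 = 0 := by
            unfold Kc; rw [if_neg (by omega), if_neg (by omega)]
          rw [k0, zero_smul, zero_add]
      rcases lt_trichotomy (t + u) n with hlt | heq | hgt
      · -- t + u < n
        rw [Q.bracket_zero s t u hs1 hsm (by omega) (by omega) (by omega) (by omega)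
          (by omega), map_zero, h1, h2]
        have k1 : Kc c s t s (n - u) = c s 1 s (n - u - t + 1) := by
          unfold Kc
          rw [if_neg (by omega), if_pos ⟨rfl, by omega⟩]
        have k2 : Kc c s u s (n - t) = c s 1 s (n - u - t + 1) := by
          unfold Kc
          rw [if_neg (by omega), if_pos ⟨rfl, by omega⟩,
            show n - t - u + 1 = n - u - t + 1 by omega]
        rw [k1, k2]
        have hn2 := Nat.odd_iff.1 hodd
        rcases Nat.even_or_odd (t + u) with hpe | hpo
        · have hsg : (-1 : ℂ) ^ (n - u) = (-1) ^ (n - t) := by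
            refine neg_one_pow_congr' _ _ ?_
            have := Nat.even_iff.1 hpe
            omega
          rw [hsg]
          simp
        · have hX : c s 1 s (n - u - t + 1) = 0 := by
            have hp2 := Nat.odd_iff.1 hpo
            refine h24 s (n - u - t + 1) hs1 hsm (by omega) (by omega) ?_
            rw [Nat.odd_iff]
            omega
          rw [hX]
          simp
      · -- t + u = n
        have hp := Q.bracket_pair s t hs1 hsm (by omega) (by omega)
        rw [show n - t = u by omega] at hp
        rw [hp, map_smul, DEN_all Q hn5 hodd hrm c δ hc hrec hrecn b hb h21 s hs1 hsm,
          h1, h2, smul_smul]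
        have k1 : Kc c s t s (n - u)
            = ((t : ℂ) - 1) * c s 0 s 0 + c s 1 s 1 := by
          unfold Kc
          rw [if_pos ⟨rfl, by omega⟩]
        have k2 : Kc c s u s (n - t)
            = ((u : ℂ) - 1) * c s 0 s 0 + c s 1 s 1 := by
          unfold Kc
          rw [if_pos ⟨rfl, by omega⟩]
        rw [k1, k2, show n - u = t by omega, show n - t = u by omega]
        have hpar : u % 2 = (t + 1) % 2 := by
          have := Nat.odd_iff.1 hodd
          omega
        have hsg : (-1 : ℂ) ^ u = -((-1 : ℂ) ^ t) := by
          rw [neg_one_pow_congr' u (t + 1) hpar, pow_succ]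
          ring
        rw [hsg]
        have hcast : (t : ℂ) + (u : ℂ) = (n : ℂ) := by
          have : t + u = n := by omega
          exact_mod_cast this
        have hco : (-1 : ℂ) ^ t * lam c n s
            = (-1 : ℂ) ^ t * (((t : ℂ) - 1) * c s 0 s 0 + c s 1 s 1)
              + -(-((-1 : ℂ) ^ t) * (((u : ℂ) - 1) * c s 0 s 0 + c s 1 s 1)) := by
          unfold lam
          linear_combination (-(-1 : ℂ) ^ t * c s 0 s 0) * hcast
        rw [hco, add_smul, neg_smul]
      · -- t + u > n
        rw [Q.bracket_zero s t u hs1 hsm (by omega) (by omega) (by omega) (by omega)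
          (by omega), map_zero, h1, h2]
        have k1 : Kc c s t s (n - u) = 0 := by
          unfold Kc; rw [if_neg (by omega), if_neg (by omega)]
        have k2 : Kc c s u s (n - t) = 0 := by
          unfold Kc; rw [if_neg (by omega), if_neg (by omega)]
        rw [k1, k2]
        simp
  · -- u = n, s ≤ r
    rw [hueq]
    have htn : t ≤ n - 1 := by omega
    have hLHS : ⁅Q.e s t, Q.e s n⁆ = 0 := by
      rcases Nat.eq_zero_or_pos t with rfl | ht1'
      · exact Q.bracket_e0_n s hs1 hsm
      · exact Q.bracket_zero s t n hs1 hsm ht1' (by omega) (by omega) le_rfl (by omega)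
    rw [hLHS, map_zero, DEN Q hn5 hodd hrm c δ hc hrec hrecn s hs1 hsr]
    have h2 : ⁅Q.e s t, lam c n s • Q.e s n⁆ = 0 := by
      rw [lie_smul, ← lie_skew, en_bracket Q hn5 s s t hs1 hsm hs1 hsm (by omega),
        neg_zero, smul_zero]
    rw [h2, add_zero]
    by_cases ht0 : t = 0
    · subst ht0
      rw [hc0 Q c δ hc s hs1 hsm, add_lie, Ln Q hn5 (c s 0) s hs1 hsm,
        esum_bracket Q hn5 hrm _ s n hs1 hsm le_rfl, add_zero]
    by_cases ht1 : t = 1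
    · subst ht1
      rw [hc1 Q c δ hc s hs1 hsm, add_lie, Ln Q hn5 (c s 1) s hs1 hsm,
        esum_bracket Q hn5 hrm _ s n hs1 hsm le_rfl, add_zero]
    · rw [KF Q hn5 hodd hrm c δ hc hrec s hs1 hsm t (by omega) htn, add_lie,
        Ln Q hn5 (Kc c s t) s hs1 hsm, smul_lie,
        en_bracket Q hn5 s s n hs1 hsm hs1 hsm le_rfl, smul_zero, add_zero]

end Backward3
section Backward4

variable {n m r : ℕ} {N : Type*} [LieRing N] [LieAlgebra ℂ N]
variable (Q : QuasiQnFiliform n m r N)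
variable (hn5 : 5 ≤ n) (hodd : Odd n) (hrm : r ≤ m)
variable (c : ℕ → ℕ → ℕ → ℕ → ℂ) (δ : N →ₗ[ℂ] N)
variable (hc : ∀ s t, 1 ≤ s → s ≤ m → t ≤ 1 →
      δ (Q.e s t) = ∑ i ∈ Icc 1 m, ∑ j ∈ range n, c s t i j • Q.e i j
        + ∑ i ∈ Icc 1 r, c s t i n • Q.e i n)
variable (hrec : ∀ s t, 1 ≤ s → s ≤ m → 2 ≤ t → t ≤ n - 1 →
      δ (Q.e s t) = ⁅δ (Q.e s 0), Q.e s (t - 1)⁆ + ⁅Q.e s 0, δ (Q.e s (t - 1))⁆)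
variable (hrecn : ∀ s, 1 ≤ s → s ≤ r →
      δ (Q.e s n) = -⁅δ (Q.e s 1), Q.e s (n - 1)⁆ - ⁅Q.e s 1, δ (Q.e s (n - 1))⁆)
variable (b : ℕ → ℕ → ℂ)
  (hb : ∀ i, 1 ≤ i → i ≤ m → Q.e i n = ∑ j ∈ Icc 1 r, b j i • Q.e j n)
variable
  (hW1 : ∀ s p j, 1 ≤ s → s ≤ m → 1 ≤ p → p ≤ m → j < n → (p ≠ s ∨ j = 1) → c s 0 p j = 0)
  (hW3 : ∀ s p j, 1 ≤ s → s ≤ m → 1 ≤ p → p ≤ m → j ≤ n - 2 → (p ≠ s ∨ j = 0) → c s 1 p j = 0)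
  (h24 : ∀ s i, 1 ≤ s → s ≤ m → 3 ≤ i → i ≤ n - 2 → Odd i → c s 1 s i = 0)
  (h21 : ∀ s j, r < s → s ≤ m → 1 ≤ j → j ≤ r → b j s * (lam c n s - lam c n j) = 0)
  (h25 : ∀ s p j, 1 ≤ s → s ≤ m → 1 ≤ p → p ≤ m → 1 ≤ j → j ≤ r →
      c s 1 p (n - 1) * b j p - c p 1 s (n - 1) * b j s = 0)

include hn5 hodd hrm hc hb hW3 h25 in
lemma cross11 (s p : ℕ) (hs1 : 1 ≤ s) (hsm : s ≤ m) (hp1 : 1 ≤ p) (hpm : p ≤ m)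
    (hsp : s ≠ p) :
    δ ⁅Q.e s 1, Q.e p 1⁆ = ⁅δ (Q.e s 1), Q.e p 1⁆ + ⁅Q.e s 1, δ (Q.e p 1)⁆ := by
  have e1 : (-1 : ℂ) ^ (n - 1) = 1 := (Nat.Odd.sub_odd hodd odd_one).neg_one_pow
  rw [Q.bracket_comm s p 1 1 hs1 hsm hp1 hpm hsp (by omega) (by omega), map_zero]
  have h1 : ⁅δ (Q.e s 1), Q.e p 1⁆ = (c s 1 p (n - 1)) • Q.e p n := by
    rw [hc1 Q c δ hc s hs1 hsm, add_lie, Lmid Q hn5 (c s 1) p 1 hp1 hpm le_rfl (by omega),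
      esum_bracket Q hn5 hrm _ p 1 hp1 hpm (by omega), add_zero,
      hW3 s p 0 hs1 hsm hp1 hpm (by omega) (Or.inl (Ne.symm hsp)), zero_smul, zero_add,
      e1, one_mul]
  have h2 : ⁅Q.e s 1, δ (Q.e p 1)⁆ = -((c p 1 s (n - 1)) • Q.e s n) := by
    rw [← lie_skew, hc1 Q c δ hc p hp1 hpm, add_lie,
      Lmid Q hn5 (c p 1) s 1 hs1 hsm le_rfl (by omega),
      esum_bracket Q hn5 hrm _ s 1 hs1 hsm (by omega), add_zero,
      hW3 p s 0 hp1 hpm hs1 hsm (by omega) (Or.inl hsp), zero_smul, zero_add, e1, one_mul]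
  rw [h1, h2, en_esum Q b hb (c s 1 p (n - 1)) p hp1 hpm,
    en_esum Q b hb (c p 1 s (n - 1)) s hs1 hsm, esum_neg, esum_add]
  symm
  unfold esum
  refine Finset.sum_eq_zero fun j hj => ?_
  rw [mem_Icc] at hj
  have h3 := h25 s p j hs1 hsm hp1 hpm hj.1 hj.2
  show (c s 1 p (n - 1) * b j p + -(c p 1 s (n - 1) * b j s)) • Q.e j n = 0
  rw [show c s 1 p (n - 1) * b j p + -(c p 1 s (n - 1) * b j s) = 0 by linear_combination h3,
    zero_smul]

lemma Dswap (x y : N) (h : δ ⁅x, y⁆ = ⁅δ x, y⁆ + ⁅x, δ y⁆) :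
    δ ⁅y, x⁆ = ⁅δ y, x⁆ + ⁅y, δ x⁆ := by
  rw [← lie_skew y x, ← lie_skew y (δ x), ← lie_skew (δ y) x, map_neg, h]
  abel

include hn5 hodd hrm hc hrec hrecn hb hW1 hW3 h24 h21 h25 in
lemma Dbasis (s t p u : ℕ) (hs1 : 1 ≤ s) (hsm : s ≤ m) (hp1 : 1 ≤ p) (hpm : p ≤ m)
    (ht : t ≤ n - 1 ∨ (t = n ∧ s ≤ r)) (hu : u ≤ n - 1 ∨ (u = n ∧ p ≤ r)) :
    δ ⁅Q.e s t, Q.e p u⁆ = ⁅δ (Q.e s t), Q.e p u⁆ + ⁅Q.e s t, δ (Q.e p u)⁆ := by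
  have main : ∀ s t p u, 1 ≤ s → s ≤ m → 1 ≤ p → p ≤ m →
      (t ≤ n - 1 ∨ (t = n ∧ s ≤ r)) → (u ≤ n - 1 ∨ (u = n ∧ p ≤ r)) → t ≤ u →
      δ ⁅Q.e s t, Q.e p u⁆ = ⁅δ (Q.e s t), Q.e p u⁆ + ⁅Q.e s t, δ (Q.e p u)⁆ := by
    clear hs1 hsm hp1 hpm ht hu s t p u
    intro s t p u hs1 hsm hp1 hpm ht hu htu
    rcases eq_or_ne s p with rfl | hsp
    · rcases eq_or_ne t u with rfl | htne
      · rw [lie_self, map_zero, ← lie_skew (δ (Q.e s t)) (Q.e s t)]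
        abel
      · exact same_comp Q hn5 hodd hrm c δ hc hrec hrecn b hb hW1 hW3 h24 h21 s t u hs1 hsm
          hu (lt_of_le_of_ne htu htne)
    · by_cases hK : t = 1 ∧ u = 1
      · obtain ⟨rfl, rfl⟩ := hK
        exact cross11 Q hn5 hodd hrm c δ hc b hb hW3 h25 s p hs1 hsm hp1 hpm hsp
      · rw [Q.bracket_comm s p t u hs1 hsm hp1 hpm hsp (by omega) (by omega), map_zero]
        rw [cross1 Q hn5 hodd hrm c δ hc hrec hrecn hW1 hW3 s t p u hs1 hsm hp1 hpm hsp ht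
          (by omega) hK]
        rw [← lie_skew, cross1 Q hn5 hodd hrm c δ hc hrec hrecn hW1 hW3 p u s t hp1 hpm
          hs1 hsm (Ne.symm hsp) hu (by omega) (fun hcon => hK ⟨hcon.2, hcon.1⟩)]
        rw [neg_zero, add_zero]
  rcases le_total t u with h | h
  · exact main s t p u hs1 hsm hp1 hpm ht hu h
  · exact Dswap δ _ _ (main p u s t hp1 hpm hs1 hsm hu ht h)

include hn5 hodd hrm hc hrec hrecn hb hW1 hW3 h24 h21 h25 in
lemma der_all : ∀ x y : N, δ ⁅x, y⁆ = ⁅δ x, y⁆ + ⁅x, δ y⁆ := by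
  classical
  set v := Sum.elim (fun p : Fin m × Fin n => Q.e ((p.1 : ℕ) + 1) (p.2 : ℕ))
      (fun t : Fin r => Q.e ((t : ℕ) + 1) n) with hv
  have hvd : ∀ a b, δ ⁅v a, v b⁆ = ⁅δ (v a), v b⁆ + ⁅v a, δ (v b)⁆ := by
    rintro (⟨i, j⟩ | i) (⟨i', j'⟩ | i')
    · exact Dbasis Q hn5 hodd hrm c δ hc hrec hrecn b hb hW1 hW3 h24 h21 h25 _ _ _ _
        (by omega) (by omega) (by omega) (by omega) (Or.inl (by omega)) (Or.inl (by omega))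
    · exact Dbasis Q hn5 hodd hrm c δ hc hrec hrecn b hb hW1 hW3 h24 h21 h25 _ _ _ _
        (by omega) (by omega) (by omega) (by omega) (Or.inl (by omega))
        (Or.inr ⟨rfl, by omega⟩)
    · exact Dbasis Q hn5 hodd hrm c δ hc hrec hrecn b hb hW1 hW3 h24 h21 h25 _ _ _ _
        (by omega) (by omega) (by omega) (by omega) (Or.inr ⟨rfl, by omega⟩)
        (Or.inl (by omega))
    · exact Dbasis Q hn5 hodd hrm c δ hc hrec hrecn b hb hW1 hW3 h24 h21 h25 _ _ _ _
        (by omega) (by omega) (by omega) (by omega) (Or.inr ⟨rfl, by omega⟩)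
        (Or.inr ⟨rfl, by omega⟩)
  have hspan := Q.basis_span
  -- bilinear map D
  let A : N →ₗ[ℂ] N →ₗ[ℂ] N := LinearMap.mk₂ ℂ
    (fun x y => δ ⁅x, y⁆ - ⁅δ x, y⁆ - ⁅x, δ y⁆)
    (by intro x x' y; simp [add_lie, map_add]; abel)
    (by intro a x y; simp [smul_lie, map_smul, smul_sub])
    (by intro x y y'; simp [lie_add, map_add]; abel)
    (by intro a x y; simp [lie_smul, map_smul, smul_sub])
  have hA : A = 0 := by
    apply LinearMap.ext_on hspan
    intro x hx
    obtain ⟨a, rfl⟩ := hx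
    apply LinearMap.ext_on hspan
    intro y hy
    obtain ⟨bb, rfl⟩ := hy
    show δ ⁅v a, v bb⁆ - ⁅δ (v a), v bb⁆ - ⁅v a, δ (v bb)⁆ = _
    rw [hvd a bb]
    simp
  intro x y
  have hAxy : δ ⁅x, y⁆ - ⁅δ x, y⁆ - ⁅x, δ y⁆ = 0 := by
    have h0 := LinearMap.congr_fun (LinearMap.congr_fun hA x) y
    simpa [A] using h0
  linear_combination (norm := abel) hAxy

end Backward4
open Finset in
/-- **Theorem 2.1.** Let `N = N(Qₙ, m, r)` be a quasi `Qₙ`-filiform Lie algebra with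
`e_{in} = Σ_{j=1}^r b_{ji} e_{jn}`, and let `δ` be the linear transformation of `N`
determined by prescribing `δ e_{s0}`, `δ e_{s1}` (with coefficients `c^{st}_{ij}`) and
extending by `δ e_{st} = [δ e_{s0}, e_{s,t-1}] + [e_{s0}, δ e_{s,t-1}]` for `2 ≤ t ≤ n-1`
and `δ e_{sn} = -[δ e_{s1}, e_{s,n-1}] - [e_{s1}, δ e_{s,n-1}]` for `1 ≤ s ≤ r`.
Then `δ` is a derivation of `N` if and only if conditions (2.1)–(2.5) hold, where
`λ_s = (n-2) c^{s0}_{s0} + 2 c^{s1}_{s1}`. -/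
theorem derivation_iff_conditions
    (n d m r : ℕ) (hn : n = 2 * d + 1) (hd : 2 ≤ d)
    (hm : 1 ≤ m) (hr : 1 ≤ r) (hrm : r ≤ m)
    (N : Type*) [LieRing N] [LieAlgebra ℂ N] (Q : QuasiQnFiliform n m r N)
    (b : ℕ → ℕ → ℂ)
    (hb : ∀ i, 1 ≤ i → i ≤ m → Q.e i n = ∑ j ∈ Icc 1 r, b j i • Q.e j n)
    (δ : N →ₗ[ℂ] N) (c : ℕ → ℕ → ℕ → ℕ → ℂ)
    (hc : ∀ s t, 1 ≤ s → s ≤ m → t ≤ 1 →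
      δ (Q.e s t) = ∑ i ∈ Icc 1 m, ∑ j ∈ range n, c s t i j • Q.e i j
        + ∑ i ∈ Icc 1 r, c s t i n • Q.e i n)
    (hrec : ∀ s t, 1 ≤ s → s ≤ m → 2 ≤ t → t ≤ n - 1 →
      δ (Q.e s t) = ⁅δ (Q.e s 0), Q.e s (t - 1)⁆ + ⁅Q.e s 0, δ (Q.e s (t - 1))⁆)
    (hrecn : ∀ s, 1 ≤ s → s ≤ r →
      δ (Q.e s n) = -⁅δ (Q.e s 1), Q.e s (n - 1)⁆ - ⁅Q.e s 1, δ (Q.e s (n - 1))⁆) :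
    (∀ x y : N, δ ⁅x, y⁆ = ⁅δ x, y⁆ + ⁅x, δ y⁆) ↔
      ((∀ s j, r < s → s ≤ m → 1 ≤ j → j ≤ r →
          b j s * ((((n - 2 : ℕ) : ℂ) * c s 0 s 0 + 2 * c s 1 s 1)
            - (((n - 2 : ℕ) : ℂ) * c j 0 j 0 + 2 * c j 1 j 1)) = 0) ∧
        (∀ s, 1 ≤ s → s ≤ m →
          δ (Q.e s 0) = c s 0 s 0 • Q.e s 0 + ∑ i ∈ Icc 2 (n - 1), c s 0 s i • Q.e s i
            + ∑ i ∈ Icc 1 r, c s 0 i n • Q.e i n) ∧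
        (∀ s, 1 ≤ s → s ≤ m →
          δ (Q.e s 1) = ∑ i ∈ Icc 1 (n - 2), c s 1 s i • Q.e s i
            + ∑ i ∈ Icc 1 m, c s 1 i (n - 1) • Q.e i (n - 1)
            + ∑ i ∈ Icc 1 r, c s 1 i n • Q.e i n) ∧
        (∀ s i, 1 ≤ s → s ≤ m → 3 ≤ i → i ≤ n - 2 → Odd i → c s 1 s i = 0) ∧
        (∀ s p j, 1 ≤ s → s ≤ m → 1 ≤ p → p ≤ m → 1 ≤ j → j ≤ r →
          c s 1 p (n - 1) * b j p - c p 1 s (n - 1) * b j s = 0)) := by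
  have hn5 : 5 ≤ n := by omega
  have hodd : Odd n := Nat.odd_iff.2 (by omega)
  have lamc : ∀ s, (((n - 2 : ℕ) : ℂ) * c s 0 s 0 + 2 * c s 1 s 1) = lam c n s := by
    intro s
    unfold lam
    rw [Nat.cast_sub (by omega : 2 ≤ n)]
    norm_num
  constructor
  · intro hder
    have hW1 : ∀ s p j, 1 ≤ s → s ≤ m → 1 ≤ p → p ≤ m → j < n → (p ≠ s ∨ j = 1) →
        c s 0 p j = 0 := by
      intro s p j hs1 hsm hp1 hpm hj hcase
      rcases hcase with hne | rfl
      · rcases Nat.eq_zero_or_pos j with rfl | hj1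
        · exact (FW1b Q hn5 hodd hrm c δ hc b hb hder s p hs1 hsm hp1 hpm (Ne.symm hne)).1
        · rcases eq_or_ne j (n - 1) with rfl | hj2
          · exact (FW1b Q hn5 hodd hrm c δ hc b hb hder s p hs1 hsm hp1 hpm (Ne.symm hne)).2.1
          · exact FW1a Q hn5 hrm c δ hc hder s p j hs1 hsm hp1 hpm (Ne.symm hne) hj1 (by omega)
      · rcases eq_or_ne p s with rfl | hne
        · exact FW2 Q hn5 hodd hrm c δ hc hrec b hb hder p hp1 hpm
        · exact FW1a Q hn5 hrm c δ hc hder s p 1 hs1 hsm hp1 hpm (Ne.symm hne) le_rfl (by omega)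
    have hW3 : ∀ s p j, 1 ≤ s → s ≤ m → 1 ≤ p → p ≤ m → j ≤ n - 2 → (p ≠ s ∨ j = 0) →
        c s 1 p j = 0 := by
      intro s p j hs1 hsm hp1 hpm hj hcase
      rcases Nat.eq_zero_or_pos j with rfl | hj1
      · rcases eq_or_ne p s with rfl | hne
        · exact (FW45 Q hn5 hodd hrm c δ hc hrec b hb hder p 2 hp1 hpm le_rfl (by omega)).1
        · exact (FW6 Q hn5 hodd hrm c δ hc b hb hder s p hs1 hsm hp1 hpm (Ne.symm hne)).1
      · rcases hcase with hne | hcon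
        · exact (FW1b Q hn5 hodd hrm c δ hc b hb hder p s hp1 hpm hs1 hsm hne).2.2 j hj1 hj
        · omega
    refine ⟨?_, ?_, ?_, ?_, ?_⟩
    · intro s j hrs hsm hj1 hj2
      rw [lamc s, lamc j]
      exact FW7 Q hn5 hodd hrm c δ hc hrec hrecn b hb hder s (by omega) hsm j hj1 hj2
    · intro s hs1 hsm
      exact W_to_22 Q hn5 c δ hc hW1 s hs1 hsm
    · intro s hs1 hsm
      exact W_to_23 Q hn5 c δ hc hW3 s hs1 hsm
    · intro s i hs1 hsm hi3 hi2 hiodd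
      have h := (FW45 Q hn5 hodd hrm c δ hc hrec b hb hder s (n - i) hs1 hsm
        (by omega) (by omega)).2
      rw [show n - (n - i) = i by omega, hiodd.neg_one_pow] at h
      rcases mul_eq_zero.1 h with h0 | h0
      · norm_num at h0
      · exact h0
    · intro s p j hs1 hsm hp1 hpm hj1 hj2
      rcases eq_or_ne s p with rfl | hne
      · exact sub_self _
      · exact (FW6 Q hn5 hodd hrm c δ hc b hb hder s p hs1 hsm hp1 hpm hne).2 j hj1 hj2
  · rintro ⟨h21, h22, h23, h24, h25⟩
    have hW1 := BW0 Q hn5 c δ hc h22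
    have hW3 := BW1 Q hn5 c δ hc h23
    have h21' : ∀ s j, r < s → s ≤ m → 1 ≤ j → j ≤ r →
        b j s * (lam c n s - lam c n j) = 0 := by
      intro s j h1 h2 h3 h4
      have h5 := h21 s j h1 h2 h3 h4
      rw [lamc s, lamc j] at h5
      exact h5
    exact der_all Q hn5 hodd hrm c δ hc hrec hrecn b hb hW1 hW3 h24 h21' h25
end
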